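/- arXiv:2003.02513 — 3 statements merged into one kernel-verified Lean document; each statement's English description precedes it below -/
import Mathlib

section
/- Let z_1,…,z_n be points of a set X and let F be a family of functions f : X → ℝ with |f(z_j)| ≤ B for all f ∈ F and all j. For a nonempty subset S ⊆ {1,…,n} write f̄(S) = (1/|S|)·Σ_{j∈S} f(z_j), and for a subset W ⊆ {1,…,n} of cardinality t and an integer 1 ≤ s ≤ t − 1 define the permutational Rademacher complexity Q_{t,s}(F, W) as the average, over all subsets T ⊆ W with |T| = s, of sup_{f∈F} | f̄(T) − f̄(W∖T) |. Let t, t' ≥ 1 with t + t' = n and t ≥ t'. Then for every integer s with 1 ≤ s < t': the average over all subsets Z ⊆ {1,…,n} with |Z| = t of sup_{f∈F} | f̄(Z) − f̄(Zᶜ) | is at most the average over all subsets Z ⊆ {1,…,n} with |Z| = t of Q_{t,s}(F, Z), where Zᶜ = {1,…,n}∖Z. -/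
/-- Average of `f` over the points `z j`, `j ∈ S`. -/
noncomputable def avgOn {X : Type*} {n : ℕ} (z : Fin n → X) (f : X → ℝ)
    (S : Finset (Fin n)) : ℝ :=
  (∑ j ∈ S, f (z j)) / (S.card : ℝ)

/-- `sup_{f ∈ F} |f̄(S) − f̄(T)|`, as a real supremum over the image of `F`. -/
noncomputable def supDev {X : Type*} {n : ℕ} (z : Fin n → X) (F : Set (X → ℝ))
    (S T : Finset (Fin n)) : ℝ :=
  sSup ((fun f => |avgOn z f S - avgOn z f T|) '' F)

/-- Permutational Rademacher complexity `Q_{t,s}(F, W)`: the average, over all subsets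
`T ⊆ W` of cardinality `s`, of `sup_{f ∈ F} |f̄(T) − f̄(W \ T)|`. -/
noncomputable def PRC {X : Type*} {n : ℕ} (z : Fin n → X) (F : Set (X → ℝ))
    (W : Finset (Fin n)) (s : ℕ) : ℝ :=
  (∑ T ∈ W.powersetCard s, supDev z F T (W \ T)) / ((W.powersetCard s).card : ℝ)

section aux
variable {X : Type*} {n : ℕ} {z : Fin n → X} {F : Set (X → ℝ)} {B : ℝ}

lemma avgOn_abs_le (hB0 : 0 ≤ B) {f : X → ℝ} (hf : ∀ j, |f (z j)| ≤ B)
    (S : Finset (Fin n)) : |avgOn z f S| ≤ B := by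
  unfold avgOn
  rcases eq_or_ne S.card 0 with h | h
  · simp [h, hB0]
  · have hc : (0:ℝ) < (S.card : ℝ) := by
      exact_mod_cast Nat.pos_of_ne_zero h
    rw [abs_div, abs_of_pos hc, div_le_iff₀ hc]
    calc |∑ j ∈ S, f (z j)| ≤ ∑ j ∈ S, |f (z j)| := Finset.abs_sum_le_sum_abs _ _
      _ ≤ ∑ _j ∈ S, B := Finset.sum_le_sum (fun j _ => hf j)
      _ = S.card * B := by rw [Finset.sum_const, nsmul_eq_mul]
      _ = B * S.card := mul_comm _ _

lemma bddAbove_dev (hB : ∀ f ∈ F, ∀ j, |f (z j)| ≤ B) (hB0 : 0 ≤ B)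
    (S T : Finset (Fin n)) :
    BddAbove ((fun f => |avgOn z f S - avgOn z f T|) '' F) := by
  refine ⟨2 * B, ?_⟩
  rintro x ⟨f, hf, rfl⟩
  calc |avgOn z f S - avgOn z f T| ≤ |avgOn z f S| + |avgOn z f T| := abs_sub _ _
    _ ≤ B + B := add_le_add (avgOn_abs_le hB0 (hB f hf) S) (avgOn_abs_le hB0 (hB f hf) T)
    _ = 2 * B := by ring

lemma abs_le_supDev (hB : ∀ f ∈ F, ∀ j, |f (z j)| ≤ B) (hB0 : 0 ≤ B)
    {f : X → ℝ} (hf : f ∈ F) (S T : Finset (Fin n)) :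
    |avgOn z f S - avgOn z f T| ≤ supDev z F S T :=
  le_csSup (bddAbove_dev hB hB0 S T) ⟨f, hf, rfl⟩

lemma card_filter_mem_powersetCard {W : Finset (Fin n)} {j : Fin n}
    (hj : j ∈ W) (k : ℕ) :
    ((W.powersetCard (k+1)).filter (fun T => j ∈ T)).card = (W.card - 1).choose k := by
  have h : ((W.powersetCard (k+1)).filter (fun T => j ∈ T)).card
      = ((W.erase j).powersetCard k).card := by
    refine Finset.card_bij' (fun T _ => T.erase j) (fun S _ => insert j S) ?_ ?_ ?_ ?_
    · intro T hT
      simp only [Finset.mem_filter, Finset.mem_powersetCard] at hT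
      rw [Finset.mem_powersetCard]
      exact ⟨Finset.erase_subset_erase _ hT.1.1,
        by rw [Finset.card_erase_of_mem hT.2, hT.1.2]; omega⟩
    · intro S hS
      rw [Finset.mem_powersetCard] at hS
      have hjS : j ∉ S := fun h => (Finset.notMem_erase j W) (hS.1 h)
      simp only [Finset.mem_filter, Finset.mem_powersetCard]
      refine ⟨⟨?_, ?_⟩, Finset.mem_insert_self _ _⟩
      · exact Finset.insert_subset hj (hS.1.trans (Finset.erase_subset _ _))
      · rw [Finset.card_insert_of_notMem hjS, hS.2]
    · intro T hT
      simp only [Finset.mem_filter] at hT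
      exact Finset.insert_erase hT.2
    · intro S hS
      rw [Finset.mem_powersetCard] at hS
      exact Finset.erase_insert (fun h => (Finset.notMem_erase j W) (hS.1 h))
  rw [h, Finset.card_powersetCard, Finset.card_erase_of_mem hj]

lemma sum_avgOn (z : Fin n → X) (f : X → ℝ)
    {W : Finset (Fin n)} {k : ℕ} (hk : 1 ≤ k) (hkW : k ≤ W.card) :
    ∑ T ∈ W.powersetCard k, avgOn z f T = (W.card.choose k : ℝ) * avgOn z f W := by
  obtain ⟨k, rfl⟩ : ∃ k', k = k' + 1 := ⟨k - 1, by omega⟩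
  have hW : 1 ≤ W.card := le_trans hk hkW
  have h1 : ∀ T ∈ W.powersetCard (k+1), avgOn z f T
      = (∑ i ∈ T, f (z i)) / ((k:ℝ)+1) := by
    intro T hT
    rw [Finset.mem_powersetCard] at hT
    rw [avgOn, hT.2]; push_cast; ring_nf
  rw [Finset.sum_congr rfl h1, ← Finset.sum_div]
  have h2 : ∑ T ∈ W.powersetCard (k+1), ∑ i ∈ T, f (z i)
      = ((W.card - 1).choose k : ℝ) * ∑ i ∈ W, f (z i) := by
    have hswap : ∀ T ∈ W.powersetCard (k+1), ∑ i ∈ T, f (z i)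
        = ∑ i ∈ W, if i ∈ T then f (z i) else 0 := by
      intro T hT
      rw [Finset.mem_powersetCard] at hT
      rw [Finset.sum_ite_mem, Finset.inter_eq_right.mpr hT.1]
    rw [Finset.sum_congr rfl hswap, Finset.sum_comm, Finset.mul_sum]
    refine Finset.sum_congr rfl fun i hi => ?_
    rw [← Finset.sum_filter, Finset.sum_const, nsmul_eq_mul,
      card_filter_mem_powersetCard hi k]
  rw [h2, avgOn]
  have hnat : (W.card : ℝ) * ((W.card - 1).choose k : ℝ)
      = (W.card.choose (k+1) : ℝ) * ((k:ℝ)+1) := by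
    have := Nat.add_one_mul_choose_eq (W.card - 1) k
    have hW' : W.card - 1 + 1 = W.card := by omega
    rw [hW'] at this
    exact_mod_cast congrArg (Nat.cast : ℕ → ℝ) this
  have hm : (W.card : ℝ) ≠ 0 := by positivity
  have hk1 : ((k:ℝ)+1) ≠ 0 := by positivity
  field_simp
  linear_combination (∑ i ∈ W, f (z i)) * hnat

end aux

section reindex
variable {n : ℕ}

lemma sum_sdiff_powersetCard (g : Finset (Fin n) → ℝ) (Z : Finset (Fin n)) (s : ℕ)
    (hs : s ≤ Z.card) :
    ∑ R ∈ Z.powersetCard s, g (Z \ R) = ∑ S ∈ Z.powersetCard (Z.card - s), g S := by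
  refine Finset.sum_nbij' (fun R => Z \ R) (fun S => Z \ S) ?_ ?_ ?_ ?_ ?_
  · intro R hR
    rw [Finset.mem_powersetCard] at hR ⊢
    exact ⟨Finset.sdiff_subset, by rw [Finset.card_sdiff_of_subset hR.1, hR.2]⟩
  · intro S hS
    rw [Finset.mem_powersetCard] at hS ⊢
    refine ⟨Finset.sdiff_subset, ?_⟩
    rw [Finset.card_sdiff_of_subset hS.1, hS.2]
    omega
  · intro R hR
    rw [Finset.mem_powersetCard] at hR
    exact Finset.sdiff_sdiff_eq_self hR.1
  · intro S hS
    rw [Finset.mem_powersetCard] at hS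
    exact Finset.sdiff_sdiff_eq_self hS.1
  · intro R _; rfl

lemma step2 (g : Finset (Fin n) → Finset (Fin n) → ℝ) (t s : ℕ) :
    ∑ Z ∈ (Finset.univ : Finset (Fin n)).powersetCard t, ∑ R ∈ Z.powersetCard s,
        ∑ T ∈ Zᶜ.powersetCard s, g T (Z \ R)
      = ∑ W ∈ (Finset.univ : Finset (Fin n)).powersetCard t, ∑ T ∈ W.powersetCard s,
        ∑ R ∈ Wᶜ.powersetCard s, g T (W \ T) := by
  have e1 : (∑ Z ∈ (Finset.univ : Finset (Fin n)).powersetCard t, ∑ R ∈ Z.powersetCard s,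
        ∑ T ∈ Zᶜ.powersetCard s, g T (Z \ R))
      = ∑ x ∈ ((Finset.univ : Finset (Fin n)).powersetCard t).sigma
          (fun Z => (Z.powersetCard s).sigma (fun _R => Zᶜ.powersetCard s)),
          g x.2.2 (x.1 \ x.2.1) := by
    rw [← Finset.sum_sigma' ((Finset.univ : Finset (Fin n)).powersetCard t)
      (fun Z => (Z.powersetCard s).sigma (fun _R => Zᶜ.powersetCard s))
      (fun Z p => g p.2 (Z \ p.1))]
    exact Finset.sum_congr rfl fun Z _ => Finset.sum_sigma' (Z.powersetCard s)
      (fun _R => Zᶜ.powersetCard s) (fun R T => g T (Z \ R))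
  have e2 : (∑ W ∈ (Finset.univ : Finset (Fin n)).powersetCard t, ∑ T ∈ W.powersetCard s,
        ∑ R ∈ Wᶜ.powersetCard s, g T (W \ T))
      = ∑ y ∈ ((Finset.univ : Finset (Fin n)).powersetCard t).sigma
          (fun W => (W.powersetCard s).sigma (fun _T => Wᶜ.powersetCard s)),
          g y.2.1 (y.1 \ y.2.1) := by
    rw [← Finset.sum_sigma' ((Finset.univ : Finset (Fin n)).powersetCard t)
      (fun W => (W.powersetCard s).sigma (fun _T => Wᶜ.powersetCard s))
      (fun W p => g p.1 (W \ p.1))]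
    exact Finset.sum_congr rfl fun W _ => Finset.sum_sigma' (W.powersetCard s)
      (fun _T => Wᶜ.powersetCard s) (fun T R => g T (W \ T))
  rw [e1, e2]
  refine Finset.sum_nbij' (fun x => ⟨(x.1 \ x.2.1) ∪ x.2.2, x.2.2, x.2.1⟩)
    (fun y => ⟨(y.1 \ y.2.1) ∪ y.2.2, y.2.2, y.2.1⟩) ?_ ?_ ?_ ?_ ?_
  · rintro ⟨Z, R, T⟩ hx
    simp only [Finset.mem_sigma, Finset.mem_powersetCard] at hx ⊢
    obtain ⟨⟨_, hZc⟩, ⟨hRZ, hRc⟩, ⟨hTZ, hTc⟩⟩ := hx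
    have hst : s ≤ t := by
      have := Finset.card_le_card hRZ; omega
    have hTZ' : ∀ a ∈ T, a ∉ Z := fun a ha => by
      have := hTZ ha; rwa [Finset.mem_compl] at this
    have hdisj : Disjoint (Z \ R) T := Finset.disjoint_left.mpr
      (fun a ha hb => hTZ' a hb (Finset.mem_sdiff.mp ha).1)
    refine ⟨⟨Finset.subset_univ _, ?_⟩, ⟨Finset.subset_union_right, hTc⟩, ⟨?_, hRc⟩⟩
    · rw [Finset.card_union_of_disjoint hdisj, Finset.card_sdiff_of_subset hRZ, hZc, hRc, hTc]
      omega
    · intro a ha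
      have h1 : a ∈ Z := hRZ ha
      have h2 : a ∉ T := fun h => hTZ' a h h1
      simp only [Finset.mem_compl, Finset.mem_union, Finset.mem_sdiff]
      push_neg
      tauto
  · rintro ⟨W, T, R⟩ hy
    simp only [Finset.mem_sigma, Finset.mem_powersetCard] at hy ⊢
    obtain ⟨⟨_, hWc⟩, ⟨hTW, hTc⟩, ⟨hRW, hRc⟩⟩ := hy
    have hst : s ≤ t := by
      have := Finset.card_le_card hTW; omega
    have hRW' : ∀ a ∈ R, a ∉ W := fun a ha => by
      have := hRW ha; rwa [Finset.mem_compl] at this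
    have hdisj : Disjoint (W \ T) R := Finset.disjoint_left.mpr
      (fun a ha hb => hRW' a hb (Finset.mem_sdiff.mp ha).1)
    refine ⟨⟨Finset.subset_univ _, ?_⟩, ⟨Finset.subset_union_right, hRc⟩, ⟨?_, hTc⟩⟩
    · rw [Finset.card_union_of_disjoint hdisj, Finset.card_sdiff_of_subset hTW, hWc, hTc, hRc]
      omega
    · intro a ha
      have h1 : a ∈ W := hTW ha
      have h2 : a ∉ R := fun h => hRW' a h h1
      simp only [Finset.mem_compl, Finset.mem_union, Finset.mem_sdiff]
      push_neg
      tauto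
  · rintro ⟨Z, R, T⟩ hx
    simp only [Finset.mem_sigma, Finset.mem_powersetCard] at hx
    obtain ⟨⟨_, _⟩, ⟨hRZ, _⟩, ⟨hTZ, _⟩⟩ := hx
    have h1 : ((Z \ R) ∪ T) \ T = Z \ R := by
      rw [Finset.union_sdiff_right]
      apply Finset.sdiff_eq_self_of_disjoint
      exact Finset.disjoint_left.mpr (fun a ha hb => by
        have := hTZ hb; rw [Finset.mem_compl] at this
        exact this (Finset.mem_sdiff.mp ha).1)
    have h3 : (((Z \ R) ∪ T) \ T) ∪ R = Z := by
      rw [h1]; exact Finset.sdiff_union_of_subset hRZ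
    simp only [h3]
  · rintro ⟨W, T, R⟩ hy
    simp only [Finset.mem_sigma, Finset.mem_powersetCard] at hy
    obtain ⟨⟨_, _⟩, ⟨hTW, _⟩, ⟨hRW, _⟩⟩ := hy
    have h1 : ((W \ T) ∪ R) \ R = W \ T := by
      rw [Finset.union_sdiff_right]
      apply Finset.sdiff_eq_self_of_disjoint
      exact Finset.disjoint_left.mpr (fun a ha hb => by
        have := hRW hb; rw [Finset.mem_compl] at this
        exact this (Finset.mem_sdiff.mp ha).1)
    have h3 : (((W \ T) ∪ R) \ R) ∪ T = W := by
      rw [h1]; exact Finset.sdiff_union_of_subset hTW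
    simp only [h3]
  · rintro ⟨Z, R, T⟩ hx
    simp only [Finset.mem_sigma, Finset.mem_powersetCard] at hx
    obtain ⟨⟨_, _⟩, ⟨hRZ, _⟩, ⟨hTZ, _⟩⟩ := hx
    have h1 : ((Z \ R) ∪ T) \ T = Z \ R := by
      rw [Finset.union_sdiff_right]
      apply Finset.sdiff_eq_self_of_disjoint
      exact Finset.disjoint_left.mpr (fun a ha hb => by
        have := hTZ hb; rw [Finset.mem_compl] at this
        exact this (Finset.mem_sdiff.mp ha).1)
    simp only [h1]

end reindex

section main
variable {X : Type*} {n : ℕ}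

lemma step1 {z : Fin n → X} {F : Set (X → ℝ)} {B : ℝ}
    (hB : ∀ f ∈ F, ∀ j, |f (z j)| ≤ B) (hB0 : 0 ≤ B) (hF : F.Nonempty)
    {t t' s : ℕ} (ht'1 : 1 ≤ t') (htn : t + t' = n) (htt : t' ≤ t)
    (hs1 : 1 ≤ s) (hst : s < t')
    {Z : Finset (Fin n)} (hZ : Z ∈ (Finset.univ : Finset (Fin n)).powersetCard t) :
    (t.choose s : ℝ) * (t'.choose s : ℝ) * supDev z F Z Zᶜ
      ≤ ∑ R ∈ Z.powersetCard s, ∑ T ∈ Zᶜ.powersetCard s, supDev z F T (Z \ R) := by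
  rw [Finset.mem_powersetCard] at hZ
  have hZc : Z.card = t := hZ.2
  have hZcc : Zᶜ.card = t' := by
    rw [Finset.card_compl, hZc, Fintype.card_fin]; omega
  have hc1 : (0:ℝ) < (t.choose s : ℝ) := by
    exact_mod_cast Nat.choose_pos (by omega)
  have hc2 : (0:ℝ) < (t'.choose s : ℝ) := by
    exact_mod_cast Nat.choose_pos (by omega)
  have key : supDev z F Z Zᶜ
      ≤ (∑ R ∈ Z.powersetCard s, ∑ T ∈ Zᶜ.powersetCard s, supDev z F T (Z \ R))
        / ((t.choose s : ℝ) * (t'.choose s : ℝ)) := by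
    refine csSup_le (hF.image _) ?_
    rintro x ⟨f, hf, rfl⟩
    rw [le_div_iff₀ (by positivity)]
    have hA : ∑ T ∈ Zᶜ.powersetCard s, avgOn z f T
        = (t'.choose s : ℝ) * avgOn z f Zᶜ := by
      have := sum_avgOn z f (W := Zᶜ) (k := s) hs1 (by omega)
      rwa [hZcc] at this
    have hBsum : ∑ R ∈ Z.powersetCard s, avgOn z f (Z \ R)
        = (t.choose s : ℝ) * avgOn z f Z := by
      rw [sum_sdiff_powersetCard (fun S => avgOn z f S) Z s (by omega)]
      have := sum_avgOn z f (W := Z) (k := Z.card - s) (by omega) (by omega)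
      rw [this, hZc]
      congr 2
      rw [← hZc, Nat.choose_symm (by omega)]
    have card2 : ((Zᶜ.powersetCard s).card : ℝ) = (t'.choose s : ℝ) := by
      rw [Finset.card_powersetCard, hZcc]
    have card1 : ((Z.powersetCard s).card : ℝ) = (t.choose s : ℝ) := by
      rw [Finset.card_powersetCard, hZc]
    have hsum : ∑ R ∈ Z.powersetCard s, ∑ T ∈ Zᶜ.powersetCard s,
        (avgOn z f (Z \ R) - avgOn z f T)
        = (t.choose s : ℝ) * (t'.choose s : ℝ) * (avgOn z f Z - avgOn z f Zᶜ) := by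
      have e : ∀ R ∈ Z.powersetCard s, ∑ T ∈ Zᶜ.powersetCard s,
          (avgOn z f (Z \ R) - avgOn z f T)
          = (t'.choose s : ℝ) * avgOn z f (Z \ R)
            - (t'.choose s : ℝ) * avgOn z f Zᶜ := by
        intro R _
        rw [Finset.sum_sub_distrib, Finset.sum_const, nsmul_eq_mul, card2, hA]
      rw [Finset.sum_congr rfl e, Finset.sum_sub_distrib, ← Finset.mul_sum, hBsum,
        Finset.sum_const, nsmul_eq_mul, card1]
      ring
    calc |avgOn z f Z - avgOn z f Zᶜ| * ((t.choose s : ℝ) * (t'.choose s : ℝ))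
        = |∑ R ∈ Z.powersetCard s, ∑ T ∈ Zᶜ.powersetCard s,
            (avgOn z f (Z \ R) - avgOn z f T)| := by
          rw [hsum, abs_mul, abs_of_pos (by positivity : (0:ℝ) < (t.choose s : ℝ) * (t'.choose s : ℝ)),
            mul_comm]
      _ ≤ ∑ R ∈ Z.powersetCard s, ∑ T ∈ Zᶜ.powersetCard s,
            |avgOn z f (Z \ R) - avgOn z f T| :=
          (Finset.abs_sum_le_sum_abs _ _).trans
            (Finset.sum_le_sum fun R _ => Finset.abs_sum_le_sum_abs _ _)
      _ ≤ ∑ R ∈ Z.powersetCard s, ∑ T ∈ Zᶜ.powersetCard s, supDev z F T (Z \ R) :=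
          Finset.sum_le_sum fun R _ => Finset.sum_le_sum fun T _ => by
            rw [abs_sub_comm]; exact abs_le_supDev hB hB0 hf _ _
  calc (t.choose s : ℝ) * (t'.choose s : ℝ) * supDev z F Z Zᶜ
      ≤ (t.choose s : ℝ) * (t'.choose s : ℝ)
        * ((∑ R ∈ Z.powersetCard s, ∑ T ∈ Zᶜ.powersetCard s, supDev z F T (Z \ R))
          / ((t.choose s : ℝ) * (t'.choose s : ℝ))) :=
        mul_le_mul_of_nonneg_left key (by positivity)
    _ = ∑ R ∈ Z.powersetCard s, ∑ T ∈ Zᶜ.powersetCard s, supDev z F T (Z \ R) := by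
        field_simp

end main

/-- (Lemma 3 of the paper.) For a uniformly bounded function class
`F` on points `z_1,…,z_n`, `t + t' = n`, `t ≥ t' ≥ 1`, and `1 ≤ s < t'`: the average,
over all size-`t` subsets `Z` of `{1,…,n}`, of `sup_{f∈F} |f̄(Z) − f̄(Zᶜ)|` is at most
the average over all size-`t` subsets `Z` of `Q_{t,s}(F, Z)`. -/
theorem stmt14 {X : Type*} (n : ℕ) (z : Fin n → X) (F : Set (X → ℝ)) (B : ℝ)
    (hB : ∀ f ∈ F, ∀ j, |f (z j)| ≤ B)
    (t t' : ℕ) (ht'1 : 1 ≤ t') (htn : t + t' = n) (htt : t' ≤ t)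
    (s : ℕ) (hs1 : 1 ≤ s) (hst : s < t') :
    (∑ Z ∈ (Finset.univ : Finset (Fin n)).powersetCard t, supDev z F Z Zᶜ) /
        (Nat.choose n t : ℝ)
      ≤ (∑ Z ∈ (Finset.univ : Finset (Fin n)).powersetCard t, PRC z F Z s) /
        (Nat.choose n t : ℝ) := by
  rcases Set.eq_empty_or_nonempty F with hF | hF
  · have hsup : ∀ S T : Finset (Fin n), supDev z F S T = 0 := by
      intro S T; rw [supDev, hF]; simp [Real.sSup_empty]
    have hPRC : ∀ Z : Finset (Fin n), PRC z F Z s = 0 := by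
      intro Z; rw [PRC]; simp [hsup]
    simp [hsup, hPRC]
  · obtain ⟨f0, hf0⟩ := hF
    have hB0 : 0 ≤ B := le_trans (abs_nonneg _) (hB f0 hf0 ⟨0, by omega⟩)
    have hc1 : (0:ℝ) < (t.choose s : ℝ) := by
      exact_mod_cast Nat.choose_pos (by omega)
    have hc2 : (0:ℝ) < (t'.choose s : ℝ) := by
      exact_mod_cast Nat.choose_pos (by omega)
    have hN : (0:ℝ) < (n.choose t : ℝ) := by
      exact_mod_cast Nat.choose_pos (by omega)
    rw [div_le_div_iff_of_pos_right hN]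
    have h2 : ∑ Z ∈ (Finset.univ : Finset (Fin n)).powersetCard t,
        ((t.choose s : ℝ) * (t'.choose s : ℝ) * supDev z F Z Zᶜ)
        ≤ ∑ Z ∈ (Finset.univ : Finset (Fin n)).powersetCard t,
          ∑ R ∈ Z.powersetCard s, ∑ T ∈ Zᶜ.powersetCard s, supDev z F T (Z \ R) :=
      Finset.sum_le_sum fun Z hZ =>
        step1 hB hB0 ⟨f0, hf0⟩ ht'1 htn htt hs1 hst hZ
    rw [step2 (fun T S => supDev z F T S) t s] at h2
    have h3 : ∀ W ∈ (Finset.univ : Finset (Fin n)).powersetCard t,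
        ∑ T ∈ W.powersetCard s, ∑ R ∈ Wᶜ.powersetCard s, supDev z F T (W \ T)
        = (t'.choose s : ℝ) * ∑ T ∈ W.powersetCard s, supDev z F T (W \ T) := by
      intro W hW
      rw [Finset.mem_powersetCard] at hW
      have hWcc : Wᶜ.card = t' := by
        rw [Finset.card_compl, hW.2, Fintype.card_fin]; omega
      rw [Finset.mul_sum]
      refine Finset.sum_congr rfl fun T _ => ?_
      rw [Finset.sum_const, nsmul_eq_mul, Finset.card_powersetCard, hWcc]
    rw [Finset.sum_congr rfl h3, ← Finset.mul_sum, ← Finset.mul_sum] at h2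
    have h4 : ∀ Z ∈ (Finset.univ : Finset (Fin n)).powersetCard t, PRC z F Z s
        = (∑ T ∈ Z.powersetCard s, supDev z F T (Z \ T)) / (t.choose s : ℝ) := by
      intro Z hZ
      rw [Finset.mem_powersetCard] at hZ
      rw [PRC, Finset.card_powersetCard, hZ.2]
    rw [Finset.sum_congr rfl h4, ← Finset.sum_div, le_div_iff₀ hc1]
    have h5 : (t'.choose s : ℝ)
        * ((∑ Z ∈ (Finset.univ : Finset (Fin n)).powersetCard t, supDev z F Z Zᶜ)
            * (t.choose s : ℝ))
        ≤ (t'.choose s : ℝ)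
        * ∑ Z ∈ (Finset.univ : Finset (Fin n)).powersetCard t,
            ∑ T ∈ Z.powersetCard s, supDev z F T (Z \ T) := by
      linarith [h2]
    exact le_of_mul_le_mul_left h5 hc2
end

section
/- Consider the multi-dimensional Simple Online Algorithm: given data (r_j, A_j), j = 1,…,n, with r_j = (r_{j1},…,r_{jk}) ∈ ℝ^k and A_j ∈ ℝ^{m×k} with columns a_{j1},…,a_{jk} ∈ ℝ^m, and a vector d ∈ ℝ^m, define p_1 = 0 ∈ ℝ^m and, for t = 1,…,n: set v_t = max_{l=1,…,k}(r_{tl} − a_{tl}ᵀp_t); if v_t > 0, choose any index l_t attaining this maximum and set x_t = e_{l_t} (the l_t-th standard basis vector of ℝ^k), otherwise set x_t = 0; then p_{t+1} = (p_t + (1/√n)(A_t x_t − d)) ∨ 0, where ∨ denotes the componentwise maximum. Suppose |r_{jl}| ≤ r̄ and ‖a_{jl}‖_∞ ≤ ā for all j, l, and 0 < d̲ ≤ d_i ≤ d̄ for all i. Then for every t = 1,…,n and any choice of the indices l_t: ‖p_{t+1}‖₂² ≤ ‖p_t‖₂² + m(ā + d̄)²/n + 2r̄/√n − (2/√n)·dᵀp_t.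 -/
/-- (Key one-step inequality in the proof of Theorem 3.) For the
multi-dimensional Simple Online Algorithm — with `v_t = max_l (r_{tl} − a_{tl}ᵀp_t)`,
`x_t = e_{l_t}` for any maximizer `l_t` if `v_t > 0` and `x_t = 0` otherwise, and
`p_{t+1} = (p_t + (1/√n)(A_t x_t − d)) ∨ 0` — one has, for every `t = 1,…,n` and any
choice of the indices `l_t`:
`‖p_{t+1}‖₂² ≤ ‖p_t‖₂² + m(ā+d̄)²/n + 2r̄/√n − (2/√n) dᵀp_t`. -/
theorem stmt16 (m k n : ℕ) (hn : 0 < n)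
    (r : ℕ → Fin k → ℝ) (A : ℕ → Fin m → Fin k → ℝ) (d : Fin m → ℝ)
    (rbar abar dlb dbar : ℝ) (hdlb : 0 < dlb)
    (hr : ∀ j < n, ∀ l, |r j l| ≤ rbar) (ha : ∀ j < n, ∀ i l, |A j i l| ≤ abar)
    (hd : ∀ i, dlb ≤ d i ∧ d i ≤ dbar)
    (p : ℕ → Fin m → ℝ) (x : ℕ → Fin k → ℝ) (v : ℕ → ℝ) (l : ℕ → Fin k)
    (hp0 : p 0 = 0)
    (hv : ∀ t, IsGreatest (Set.range fun l' => r t l' - ∑ i, A t i l' * p t i) (v t))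
    (hl : ∀ t, 0 < v t → r t (l t) - ∑ i, A t i (l t) * p t i = v t)
    (hx1 : ∀ t, 0 < v t → x t = fun l' => if l' = l t then 1 else 0)
    (hx0 : ∀ t, v t ≤ 0 → x t = 0)
    (hrec : ∀ t, p (t + 1) = fun i =>
      max (p t i + (1 / Real.sqrt n) * ((∑ l', A t i l' * x t l') - d i)) 0) :
    ∀ t < n,
      ∑ i, (p (t + 1) i) ^ 2 ≤
        ∑ i, (p t i) ^ 2 + (m : ℝ) * (abar + dbar) ^ 2 / n + 2 * rbar / Real.sqrt n
          - (2 / Real.sqrt n) * ∑ i, d i * p t i := by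
  intro t ht
  have hn0 : (0 : ℝ) < n := by exact_mod_cast hn
  have hsq : (0 : ℝ) < Real.sqrt n := Real.sqrt_pos.2 hn0
  set s : ℝ := 1 / Real.sqrt n with hsdef
  have hs0 : 0 ≤ s := by positivity
  have hss : s * s = 1 / n := by
    rw [hsdef, div_mul_div_comm, one_mul, Real.mul_self_sqrt hn0.le]
  obtain ⟨l0, -⟩ := (hv t).1
  have hrb : 0 ≤ rbar := (abs_nonneg _).trans (hr t ht l0)
  set g : Fin m → ℝ := fun i => ∑ l', A t i l' * x t l' with hg
  have hgb : ∀ i, |g i| ≤ abar := by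
    intro i
    rcases lt_or_ge 0 (v t) with hv0 | hv0
    · have hxl := hx1 t hv0
      have : g i = A t i (l t) := by
        rw [hg]; simp [hxl, mul_ite]
      rw [this]; exact ha t ht i (l t)
    · have hxl := hx0 t hv0
      have : g i = 0 := by rw [hg]; simp [hxl]
      rw [this, abs_zero]
      exact (abs_nonneg _).trans (ha t ht i l0)
  have hgd : ∀ i, (g i - d i) ^ 2 ≤ (abar + dbar) ^ 2 := by
    intro i
    have hdi := hd i
    have hdabs : |d i| ≤ dbar := by
      rw [abs_of_pos (hdlb.trans_le hdi.1)]; exact hdi.2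
    have h1 : |g i - d i| ≤ abar + dbar :=
      (abs_sub _ _).trans (add_le_add (hgb i) hdabs)
    calc (g i - d i) ^ 2 = |g i - d i| ^ 2 := (sq_abs _).symm
      _ ≤ (abar + dbar) ^ 2 := pow_le_pow_left₀ (abs_nonneg _) h1 2
  have hdot : ∑ i, p t i * g i ≤ rbar := by
    rcases lt_or_ge 0 (v t) with hv0 | hv0
    · have hxl := hx1 t hv0
      have hgeq : ∀ i, g i = A t i (l t) := by
        intro i; rw [hg]; simp [hxl, mul_ite]
      have h2 := hl t hv0
      have h3 : ∑ i, p t i * g i = r t (l t) - v t := by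
        have h4 : ∑ i, A t i (l t) * p t i = r t (l t) - v t := by linarith
        rw [← h4]
        exact Finset.sum_congr rfl fun i _ => by rw [hgeq i]; ring
      rw [h3]
      have h5 := (abs_le.1 (hr t ht (l t))).2
      linarith
    · have hxl := hx0 t hv0
      have hgeq : ∀ i, g i = 0 := by intro i; rw [hg]; simp [hxl]
      simp_rw [hgeq, mul_zero, Finset.sum_const_zero]
      exact hrb
  have hstep : ∀ i, p (t + 1) i ^ 2 ≤ (p t i + s * (g i - d i)) ^ 2 := by
    intro i
    rw [hrec t]
    show max (p t i + s * (g i - d i)) 0 ^ 2 ≤ _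
    have h1 : max (p t i + s * (g i - d i)) 0 ≤ |p t i + s * (g i - d i)| :=
      max_le (le_abs_self _) (abs_nonneg _)
    calc max (p t i + s * (g i - d i)) 0 ^ 2
        ≤ |p t i + s * (g i - d i)| ^ 2 :=
          pow_le_pow_left₀ (le_max_right _ _) h1 2
      _ = (p t i + s * (g i - d i)) ^ 2 := sq_abs _
  have hid : ∑ i, (p t i + s * (g i - d i)) ^ 2
      = (∑ i, p t i ^ 2) + 2 * s * (∑ i, p t i * g i)
        - 2 * s * (∑ i, d i * p t i) + s * s * (∑ i, (g i - d i) ^ 2) := by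
    rw [Finset.mul_sum, Finset.mul_sum, Finset.mul_sum, ← Finset.sum_add_distrib,
      ← Finset.sum_sub_distrib, ← Finset.sum_add_distrib]
    exact Finset.sum_congr rfl fun i _ => by ring
  have h4 : ∑ i, (g i - d i) ^ 2 ≤ (m : ℝ) * (abar + dbar) ^ 2 := by
    calc ∑ i, (g i - d i) ^ 2 ≤ ∑ _i : Fin m, (abar + dbar) ^ 2 :=
          Finset.sum_le_sum fun i _ => hgd i
      _ = (m : ℝ) * (abar + dbar) ^ 2 := by
          simp [Finset.sum_const, Finset.card_univ]
  have h2s : 2 * s * (∑ i, p t i * g i) ≤ 2 * s * rbar :=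
    mul_le_mul_of_nonneg_left hdot (by positivity)
  have h4s : s * s * (∑ i, (g i - d i) ^ 2) ≤ (m : ℝ) * (abar + dbar) ^ 2 / n := by
    rw [hss]
    calc (1 / (n:ℝ)) * (∑ i, (g i - d i) ^ 2)
        ≤ (1 / (n:ℝ)) * ((m : ℝ) * (abar + dbar) ^ 2) :=
          mul_le_mul_of_nonneg_left h4 (by positivity)
      _ = (m : ℝ) * (abar + dbar) ^ 2 / n := by ring
  have heq1 : 2 * s * rbar = 2 * rbar / Real.sqrt n := by
    rw [hsdef]; ring
  have heq2 : 2 * s * (∑ i, d i * p t i) = (2 / Real.sqrt n) * ∑ i, d i * p t i := by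
    rw [hsdef]; ring
  calc ∑ i, p (t + 1) i ^ 2 ≤ ∑ i, (p t i + s * (g i - d i)) ^ 2 :=
        Finset.sum_le_sum fun i _ => hstep i
    _ = _ := hid
    _ ≤ _ := by linarith
end

section
/- Let (r_j, A_j), j = 1,…,n, be i.i.d. random elements with r_j ∈ ℝ^k and A_j ∈ ℝ^{m×k} (columns a_{j1},…,a_{jk} ∈ ℝ^m), satisfying |r_{jl}| ≤ r̄ and ‖a_{jl}‖_∞ ≤ ā almost surely for all l, and let d ∈ ℝ^m satisfy 0 < d̲ ≤ d_i ≤ d̄ for all i. Run the multi-dimensional Simple Online Algorithm with a fixed measurable tie-breaking rule: p_1 = 0 ∈ ℝ^m; for t = 1,…,n set v_t = max_{l=1,…,k}(r_{tl} − a_{tl}ᵀp_t); if v_t > 0 set x_t = e_{l_t} where l_t is the smallest index attaining the maximum, otherwise x_t = 0; then p_{t+1} = (p_t + (1/√n)(A_t x_t − d)) ∨ 0, with ∨ the componentwise maximum. Let R_n* be the (random) optimal value of the LP: maximize Σ_{j=1}^n r_jᵀx_j over x_j ∈ ℝ^k with x_j ≥ 0 and 1ᵀx_j ≤ 1 for all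 j, subject to Σ_{j=1}^n A_j x_j ≤ n·d componentwise, and let R_n = Σ_{t=1}^n r_tᵀx_t. Then E[R_n* − R_n] ≤ m·(ā + d̄)²·√n. -/
open MeasureTheory ProbabilityTheory

open Classical in
/-- The smallest index attaining the maximum of `g : Fin k → ℝ`. -/
noncomputable def argmaxIdx {k : ℕ} [NeZero k] (g : Fin k → ℝ) : Fin k :=
  (Finset.univ.filter fun l => ∀ l', g l' ≤ g l).min' (by
    obtain ⟨b, -, hb⟩ := Finset.exists_max_image (Finset.univ : Finset (Fin k)) g
      ⟨0, Finset.mem_univ 0⟩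
    exact ⟨b, Finset.mem_filter.mpr ⟨Finset.mem_univ b, fun l' => hb l' (Finset.mem_univ l')⟩⟩)

/-- The decision vector of the multi-dimensional Simple Online Algorithm at one step:
with `g l = r_{tl} − a_{tl}ᵀp_t`, if `max_l g l > 0` then the standard basis vector at
the smallest maximizer, else `0`. -/
noncomputable def mxvec {m k : ℕ} [NeZero k] (rt : Fin k → ℝ) (At : Fin m → Fin k → ℝ)
    (pt : Fin m → ℝ) : Fin k → ℝ :=
  let g : Fin k → ℝ := fun l => rt l - ∑ i, At i l * pt i
  if 0 < g (argmaxIdx g) then (fun l => if l = argmaxIdx g then 1 else 0) else 0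

/-- The dual-price iterates of the multi-dimensional Simple Online Algorithm with step
size `1/√n`. -/
noncomputable def mpIter (m k n : ℕ) [NeZero k] (r : ℕ → Fin k → ℝ)
    (A : ℕ → Fin m → Fin k → ℝ) (d : Fin m → ℝ) : ℕ → Fin m → ℝ
  | 0 => 0
  | t + 1 => fun i =>
      max (mpIter m k n r A d t i + (1 / Real.sqrt n) *
        ((∑ l, A t i l * mxvec (r t) (A t) (mpIter m k n r A d t) l) - d i)) 0

/-- Optimal value of the multi-dimensional LP
`max Σ_j r_jᵀx_j  s.t.  Σ_j A_j x_j ≤ b, x_j ≥ 0, 1ᵀx_j ≤ 1`. -/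
noncomputable def LPvalMD (n m k : ℕ) (r : Fin n → Fin k → ℝ)
    (A : Fin n → Fin m → Fin k → ℝ) (b : Fin m → ℝ) : ℝ :=
  sSup ((fun x : Fin n → Fin k → ℝ => ∑ j, ∑ l, r j l * x j l) ''
    {x | (∀ j l, 0 ≤ x j l) ∧ (∀ j, ∑ l, x j l ≤ 1) ∧
      ∀ i, ∑ j, ∑ l, A j i l * x j l ≤ b i})

section ArgMax

variable {k : ℕ} [NeZero k]

lemma argmax_mem (g : Fin k → ℝ) :
    argmaxIdx g ∈ (Finset.univ.filter fun l => ∀ l', g l' ≤ g l) := by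
  classical
  rw [argmaxIdx]
  exact Finset.min'_mem _ _

lemma argmax_spec (g : Fin k → ℝ) (l : Fin k) : g l ≤ g (argmaxIdx g) := by
  classical
  have := argmax_mem g
  rw [Finset.mem_filter] at this
  exact this.2 l

lemma argmax_le (g : Fin k → ℝ) (l' : Fin k) (h : ∀ l, g l ≤ g l') : argmaxIdx g ≤ l' := by
  classical
  rw [argmaxIdx]
  exact Finset.min'_le _ _ (Finset.mem_filter.mpr ⟨Finset.mem_univ _, h⟩)

lemma argmaxIdx_eq_iff (g : Fin k → ℝ) (l0 : Fin k) :
    argmaxIdx g = l0 ↔ (∀ l, g l ≤ g l0) ∧ ∀ l', (∀ l, g l ≤ g l') → l0 ≤ l' := by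
  constructor
  · rintro rfl
    exact ⟨argmax_spec g, fun l' h => argmax_le g l' h⟩
  · rintro ⟨h1, h2⟩
    exact le_antisymm (argmax_le g l0 h1) (h2 _ (argmax_spec g))

end ArgMax

section MxAlg

variable {m k : ℕ} [NeZero k]

/-- the reduced-cost vector -/
noncomputable def gvec (rt : Fin k → ℝ) (At : Fin m → Fin k → ℝ) (pt : Fin m → ℝ) :
    Fin k → ℝ := fun l => rt l - ∑ i, At i l * pt i

/-- `max(0, max_l g l)` -/
noncomputable def phiF (rt : Fin k → ℝ) (At : Fin m → Fin k → ℝ) (pt : Fin m → ℝ) : ℝ :=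
  max (gvec rt At pt (argmaxIdx (gvec rt At pt))) 0

lemma phiF_nonneg (rt At pt) : (0:ℝ) ≤ phiF (m := m) (k := k) rt At pt := le_max_right _ _

lemma gvec_le_phiF (rt At pt) (l : Fin k) : gvec (m := m) rt At pt l ≤ phiF rt At pt :=
  le_trans (argmax_spec _ l) (le_max_left _ _)

lemma mxvec_pos_eq (rt : Fin k → ℝ) (At : Fin m → Fin k → ℝ) (pt : Fin m → ℝ)
    (hpos : 0 < gvec rt At pt (argmaxIdx (gvec rt At pt))) :
    mxvec rt At pt = fun l => if l = argmaxIdx (gvec rt At pt) then 1 else 0 := by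
  unfold mxvec
  exact if_pos hpos

lemma mxvec_neg_eq (rt : Fin k → ℝ) (At : Fin m → Fin k → ℝ) (pt : Fin m → ℝ)
    (hpos : ¬ 0 < gvec rt At pt (argmaxIdx (gvec rt At pt))) :
    mxvec rt At pt = 0 := by
  unfold mxvec
  exact if_neg hpos

lemma mxvec_apply (rt : Fin k → ℝ) (At : Fin m → Fin k → ℝ) (pt : Fin m → ℝ) (l : Fin k) :
    mxvec rt At pt l =
      if argmaxIdx (gvec rt At pt) = l ∧ 0 < gvec rt At pt l then 1 else 0 := by
  by_cases hpos : 0 < gvec rt At pt (argmaxIdx (gvec rt At pt))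
  · rw [mxvec_pos_eq rt At pt hpos]
    by_cases he : argmaxIdx (gvec rt At pt) = l
    · subst he; simp [hpos]
    · have he' : ¬ l = argmaxIdx (gvec rt At pt) := fun h => he h.symm
      simp [he, he']
  · rw [mxvec_neg_eq rt At pt hpos]
    have : ¬(argmaxIdx (gvec rt At pt) = l ∧ 0 < gvec rt At pt l) := by
      rintro ⟨rfl, h⟩; exact hpos h
    simp [this]

lemma mxvec_nonneg (rt At pt) (l : Fin k) : (0:ℝ) ≤ mxvec (m := m) rt At pt l := by
  rw [mxvec_apply]; split_ifs <;> norm_num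

lemma mxvec_sum_le_one (rt At pt) : ∑ l, mxvec (m := m) (k := k) rt At pt l ≤ 1 := by
  classical
  simp only [mxvec_apply]
  calc ∑ l, (if argmaxIdx (gvec rt At pt) = l ∧ 0 < gvec rt At pt l then (1:ℝ) else 0)
      ≤ ∑ l, (if argmaxIdx (gvec rt At pt) = l then (1:ℝ) else 0) := by
        apply Finset.sum_le_sum
        intro l _
        split_ifs with h1 h2 <;> simp_all
    _ = 1 := by simp

/-- Lemma A : the algorithm step identity. -/
lemma step_identity (rt : Fin k → ℝ) (At : Fin m → Fin k → ℝ) (pt : Fin m → ℝ) :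
    ∑ l, rt l * mxvec rt At pt l =
      phiF rt At pt + ∑ i, pt i * ∑ l, At i l * mxvec rt At pt l := by
  classical
  by_cases hpos : 0 < gvec rt At pt (argmaxIdx (gvec rt At pt))
  · rw [mxvec_pos_eq rt At pt hpos]
    set am := argmaxIdx (gvec rt At pt) with ham
    have h1 : ∑ l, rt l * (if l = am then (1:ℝ) else 0) = rt am := by
      simp [Finset.sum_ite_eq']
    have h2 : ∀ i, ∑ l, At i l * (if l = am then (1:ℝ) else 0) = At i am := by
      intro i; simp [Finset.sum_ite_eq']
    have h3 : phiF rt At pt = rt am - ∑ i, At i am * pt i := by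
      rw [phiF, max_eq_left hpos.le]; rfl
    simp only [h1, h2, h3]
    rw [Finset.sum_congr rfl (fun i _ => mul_comm (pt i) (At i am))]
    ring
  · rw [mxvec_neg_eq rt At pt hpos]
    have h3 : phiF rt At pt = 0 := by
      rw [phiF, max_eq_right (not_lt.mp hpos)]
    simp [h3]

/-- bound on a row of `A_t x_t`. -/
lemma mxvec_row_abs_le (rt : Fin k → ℝ) (At : Fin m → Fin k → ℝ) (pt : Fin m → ℝ)
    (i : Fin m) (C : ℝ) (hC : ∀ l, |At i l| ≤ C) :
    |∑ l, At i l * mxvec rt At pt l| ≤ C := by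
  classical
  have hC0 : 0 ≤ C := le_trans (abs_nonneg _) (hC (argmaxIdx (gvec rt At pt)))
  by_cases hpos : 0 < gvec rt At pt (argmaxIdx (gvec rt At pt))
  · rw [mxvec_pos_eq rt At pt hpos]
    have : ∑ l, At i l * (if l = argmaxIdx (gvec rt At pt) then (1:ℝ) else 0)
        = At i (argmaxIdx (gvec rt At pt)) := by simp [Finset.sum_ite_eq']
    rw [this]; exact hC _
  · rw [mxvec_neg_eq rt At pt hpos]; simpa using hC0

end MxAlg
section Duality

/-- Weak duality bound for the LP value, path by path. -/
lemma weak_duality {n m k : ℕ} [NeZero k] (r : Fin n → Fin k → ℝ)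
    (A : Fin n → Fin m → Fin k → ℝ) (b : Fin m → ℝ) (hb : ∀ i, 0 ≤ b i)
    (q : Fin m → ℝ) (hq : ∀ i, 0 ≤ q i) :
    LPvalMD n m k r A b ≤ ∑ i, b i * q i + ∑ j, phiF (r j) (A j) q := by
  classical
  have hRHS : 0 ≤ ∑ i, b i * q i + ∑ j, phiF (r j) (A j) q :=
    add_nonneg (Finset.sum_nonneg fun i _ => mul_nonneg (hb i) (hq i))
      (Finset.sum_nonneg fun j _ => phiF_nonneg _ _ _)
  apply Real.sSup_le _ hRHS
  rintro y ⟨x, ⟨hx0, hx1, hxb⟩, rfl⟩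
  have expand : ∀ j l, r j l * x j l
      = gvec (r j) (A j) q l * x j l + ∑ i, q i * (A j i l * x j l) := by
    intro j l
    have h : ∑ i, q i * (A j i l * x j l) = (∑ i, A j i l * q i) * x j l := by
      rw [Finset.sum_mul]; exact Finset.sum_congr rfl fun i _ => by ring
    rw [h, gvec]; ring
  calc ∑ j, ∑ l, r j l * x j l
      = (∑ j, ∑ l, gvec (r j) (A j) q l * x j l)
        + ∑ j, ∑ l, ∑ i, q i * (A j i l * x j l) := by
        rw [← Finset.sum_add_distrib]
        refine Finset.sum_congr rfl fun j _ => ?_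
        rw [← Finset.sum_add_distrib]
        exact Finset.sum_congr rfl fun l _ => expand j l
    _ ≤ (∑ j, phiF (r j) (A j) q) + ∑ i, q i * b i := by
        apply add_le_add
        · apply Finset.sum_le_sum
          intro j _
          calc ∑ l, gvec (r j) (A j) q l * x j l
              ≤ ∑ l, phiF (r j) (A j) q * x j l :=
                Finset.sum_le_sum fun l _ =>
                  mul_le_mul_of_nonneg_right (gvec_le_phiF _ _ _ l) (hx0 j l)
            _ = phiF (r j) (A j) q * ∑ l, x j l := by rw [Finset.mul_sum]
            _ ≤ phiF (r j) (A j) q * 1 :=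
                mul_le_mul_of_nonneg_left (hx1 j) (phiF_nonneg _ _ _)
            _ = phiF (r j) (A j) q := mul_one _
        · have hmul : ∀ i, q i * ∑ j, ∑ l, A j i l * x j l
              = ∑ j, ∑ l, q i * (A j i l * x j l) := by
            intro i
            rw [Finset.mul_sum]
            exact Finset.sum_congr rfl fun j _ => Finset.mul_sum _ _ _
          have hswap : ∑ j, ∑ l, ∑ i, q i * (A j i l * x j l)
              = ∑ i, q i * ∑ j, ∑ l, A j i l * x j l := by
            calc ∑ j, ∑ l, ∑ i, q i * (A j i l * x j l)
                = ∑ j, ∑ i, ∑ l, q i * (A j i l * x j l) :=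
                  Finset.sum_congr rfl fun j _ => Finset.sum_comm
              _ = ∑ i, ∑ j, ∑ l, q i * (A j i l * x j l) := Finset.sum_comm
              _ = ∑ i, q i * ∑ j, ∑ l, A j i l * x j l :=
                  Finset.sum_congr rfl fun i _ => (hmul i).symm
          rw [hswap]
          exact Finset.sum_le_sum fun i _ =>
            mul_le_mul_of_nonneg_left (hxb i) (hq i)
    _ = (∑ i, b i * q i) + ∑ j, phiF (r j) (A j) q := by
        rw [add_comm]
        congr 1
        exact Finset.sum_congr rfl fun i _ => mul_comm _ _

end Duality
section Telescope

variable {m k : ℕ} [NeZero k]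

lemma mpIter_nonneg (n : ℕ) (r : ℕ → Fin k → ℝ) (A : ℕ → Fin m → Fin k → ℝ)
    (d : Fin m → ℝ) (t : ℕ) (i : Fin m) : 0 ≤ mpIter m k n r A d t i := by
  cases t with
  | zero => simp [mpIter]
  | succ t => exact le_max_right _ _

lemma sq_max_le (a : ℝ) : (max a 0) ^ 2 ≤ a ^ 2 := by
  rcases le_or_gt a 0 with h | h
  · rw [max_eq_right h]; simpa using sq_nonneg a
  · rw [max_eq_left h.le]

lemma abs_sub_le' (a b c1 c2 : ℝ) (h1 : |a| ≤ c1) (h2 : |b| ≤ c2) : |a - b| ≤ c1 + c2 := by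
  calc |a - b| = |a + -b| := by ring_nf
    _ ≤ |a| + |-b| := abs_add_le _ _
    _ ≤ c1 + c2 := by rw [abs_neg]; exact add_le_add h1 h2

/-- Bound on the dual iterates. -/
lemma mpIter_le (n : ℕ) (r : ℕ → Fin k → ℝ) (A : ℕ → Fin m → Fin k → ℝ)
    (d : Fin m → ℝ) (abar dbar : ℝ) (t : ℕ)
    (hA : ∀ s < t, ∀ i l, |A s i l| ≤ abar) (hd : ∀ i, 0 ≤ d i ∧ d i ≤ dbar)
    (i : Fin m) :
    mpIter m k n r A d t i ≤ t * (1 / Real.sqrt n) * (abar + dbar) := by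
  induction t with
  | zero => simp [mpIter]
  | succ t ih =>
    have habar : 0 ≤ abar := le_trans (abs_nonneg _) (hA t (Nat.lt_succ_self t) i 0)
    have hdbar : 0 ≤ dbar := le_trans (hd i).1 (hd i).2
    have hγ : 0 ≤ 1 / Real.sqrt n := by positivity
    have ihb : mpIter m k n r A d t i ≤ t * (1 / Real.sqrt n) * (abar + dbar) :=
      ih (fun s hs => hA s (hs.trans (Nat.lt_succ_self t)))
    have hw : |(∑ l, A t i l * mxvec (r t) (A t) (mpIter m k n r A d t) l) - d i|
        ≤ abar + dbar := by
      apply abs_sub_le'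
      · exact mxvec_row_abs_le _ _ _ _ _ (hA t (Nat.lt_succ_self t) i)
      · rw [abs_of_nonneg (hd i).1]; exact (hd i).2
    show max _ 0 ≤ _
    apply max_le
    · have : (1 / Real.sqrt n) *
          ((∑ l, A t i l * mxvec (r t) (A t) (mpIter m k n r A d t) l) - d i)
          ≤ (1 / Real.sqrt n) * (abar + dbar) :=
        mul_le_mul_of_nonneg_left ((abs_le.mp hw).2) hγ
      push_cast
      nlinarith
    · exact mul_nonneg (mul_nonneg (by positivity) hγ) (add_nonneg habar hdbar)

/-- Pathwise telescoping bound (Lemma C). -/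
lemma telescope_bound (n : ℕ) [NeZero k] (hn : 0 < n) (r : ℕ → Fin k → ℝ)
    (A : ℕ → Fin m → Fin k → ℝ) (d : Fin m → ℝ) (abar dbar : ℝ)
    (hA : ∀ t < n, ∀ i l, |A t i l| ≤ abar) (hd : ∀ i, 0 ≤ d i ∧ d i ≤ dbar) :
    ∑ t ∈ Finset.range n, ∑ i, mpIter m k n r A d t i *
        (d i - ∑ l, A t i l * mxvec (r t) (A t) (mpIter m k n r A d t) l)
      ≤ Real.sqrt n * ((m : ℝ) * (abar + dbar) ^ 2) / 2 := by
  classical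
  set γ : ℝ := 1 / Real.sqrt n with hγdef
  have hs : (0:ℝ) < Real.sqrt n := Real.sqrt_pos.mpr (by exact_mod_cast hn)
  have hγ : 0 < γ := by positivity
  set P : ℕ → Fin m → ℝ := mpIter m k n r A d with hP
  set w : ℕ → Fin m → ℝ := fun t i => ∑ l, A t i l * mxvec (r t) (A t) (P t) l with hw
  set M : ℝ := (m : ℝ) * (abar + dbar) ^ 2 with hM
  set S : ℝ := ∑ t ∈ Finset.range n, ∑ i, P t i * (d i - w t i) with hS
  -- per-step inequality
  have key : ∀ t < n, 2 * γ * (∑ i, P t i * (d i - w t i))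
      ≤ (∑ i, (P t i) ^ 2) - (∑ i, (P (t+1) i) ^ 2) + γ ^ 2 * M := by
    intro t ht
    have hstep : ∀ i, (P (t+1) i) ^ 2
        ≤ (P t i) ^ 2 + (2 * γ) * (P t i * (w t i - d i)) + γ ^ 2 * (w t i - d i) ^ 2 := by
      intro i
      have h1 : P (t+1) i = max (P t i + γ * (w t i - d i)) 0 := rfl
      have h2 := sq_max_le (P t i + γ * (w t i - d i))
      rw [h1]
      nlinarith [h2]
    have hwd : ∀ i, (w t i - d i) ^ 2 ≤ (abar + dbar) ^ 2 := by
      intro i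
      have h : |w t i - d i| ≤ abar + dbar := by
        apply abs_sub_le'
        · exact mxvec_row_abs_le _ _ _ _ _ (hA t ht i)
        · rw [abs_of_nonneg (hd i).1]; exact (hd i).2
      exact sq_le_sq' (by linarith [(abs_le.mp h).1]) (abs_le.mp h).2
    have hsum : ∑ i, (P (t+1) i) ^ 2
        ≤ (∑ i, (P t i) ^ 2) + (2 * γ) * (∑ i, P t i * (w t i - d i))
          + γ ^ 2 * (∑ i, (w t i - d i) ^ 2) := by
      rw [Finset.mul_sum, Finset.mul_sum, ← Finset.sum_add_distrib, ← Finset.sum_add_distrib]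
      exact Finset.sum_le_sum fun i _ => hstep i
    have hsum2 : ∑ i, (w t i - d i) ^ 2 ≤ M := by
      rw [hM]
      calc ∑ i, (w t i - d i) ^ 2 ≤ ∑ _i : Fin m, (abar + dbar) ^ 2 :=
            Finset.sum_le_sum fun i _ => hwd i
        _ = (m : ℝ) * (abar + dbar) ^ 2 := by simp [mul_comm]
    have hneg : ∑ i, P t i * (d i - w t i) = - ∑ i, P t i * (w t i - d i) := by
      rw [← Finset.sum_neg_distrib]
      exact Finset.sum_congr rfl fun i _ => by ring
    rw [hneg]
    nlinarith [mul_le_mul_of_nonneg_left hsum2 (sq_nonneg γ)]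
  -- sum the per-step inequality
  have hsumkey : 2 * γ * S ≤ (∑ i, (P 0 i) ^ 2) - (∑ i, (P n i) ^ 2) + n * (γ ^ 2 * M) := by
    rw [hS, Finset.mul_sum]
    calc ∑ t ∈ Finset.range n, 2 * γ * ∑ i, P t i * (d i - w t i)
        ≤ ∑ t ∈ Finset.range n,
            ((∑ i, (P t i) ^ 2) - (∑ i, (P (t+1) i) ^ 2) + γ ^ 2 * M) :=
          Finset.sum_le_sum fun t ht => key t (Finset.mem_range.mp ht)
      _ = (∑ t ∈ Finset.range n, ((∑ i, (P t i) ^ 2) - (∑ i, (P (t+1) i) ^ 2)))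
          + n * (γ ^ 2 * M) := by
          rw [Finset.sum_add_distrib]
          congr 1
          simp [mul_comm]
      _ = (∑ i, (P 0 i) ^ 2) - (∑ i, (P n i) ^ 2) + n * (γ ^ 2 * M) := by
          rw [Finset.sum_range_sub' (fun t => ∑ i, (P t i) ^ 2)]
  have hP0 : ∑ i, (P 0 i) ^ 2 = 0 := by
    simp [hP, mpIter]
  have hPn : 0 ≤ ∑ i, (P n i) ^ 2 := Finset.sum_nonneg fun i _ => sq_nonneg _
  have hγ2 : γ ^ 2 = 1 / n := by
    rw [hγdef, div_pow, one_pow, Real.sq_sqrt (by positivity : (0:ℝ) ≤ (n:ℝ))]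
  have hM0 : 0 ≤ M := by positivity
  have h2 : 2 * γ * S ≤ M := by
    have : (n : ℝ) * (γ ^ 2 * M) = M := by
      rw [hγ2]
      field_simp
    linarith [hsumkey, hPn, hP0.ge, hP0.le]
  have hfin : S ≤ M / (2 * γ) := by
    rw [le_div_iff₀ (by positivity)]
    linarith [h2, mul_comm S (2 * γ)]
  calc S ≤ M / (2 * γ) := hfin
    _ = Real.sqrt n * M / 2 := by
      rw [hγdef]
      field_simp
  done

end Telescope
section Meas

variable {m k : ℕ} [NeZero k]

/-- the state space of one observation -/
local notation "EE" => (Fin k → ℝ) × (Fin m → Fin k → ℝ)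

lemma measurable_G (l : Fin k) :
    Measurable fun z : EE × (Fin m → ℝ) => gvec z.1.1 z.1.2 z.2 l := by
  have h1 : Measurable fun z : EE × (Fin m → ℝ) => z.1.1 l :=
    (measurable_pi_apply l).comp (measurable_fst.comp measurable_fst)
  have h2 : Measurable fun z : EE × (Fin m → ℝ) => ∑ i, z.1.2 i l * z.2 i := by
    apply Finset.measurable_sum
    intro i _
    exact Measurable.mul (f := fun z : EE × (Fin m → ℝ) => z.1.2 i l)
      (g := fun z : EE × (Fin m → ℝ) => z.2 i) ((measurable_pi_apply l).comp
      ((measurable_pi_apply i).comp (measurable_snd.comp measurable_fst)))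
      ((measurable_pi_apply i).comp measurable_snd)
  exact h1.sub h2

lemma measurable_Mset (l0 : Fin k) :
    MeasurableSet {z : EE × (Fin m → ℝ) | argmaxIdx (gvec z.1.1 z.1.2 z.2) = l0} := by
  have heq : {z : EE × (Fin m → ℝ) | argmaxIdx (gvec z.1.1 z.1.2 z.2) = l0}
      = (⋂ l, {z : EE × (Fin m → ℝ) | gvec z.1.1 z.1.2 z.2 l ≤ gvec z.1.1 z.1.2 z.2 l0})
        ∩ ⋂ l', {z : EE × (Fin m → ℝ) |
            (∀ l, gvec z.1.1 z.1.2 z.2 l ≤ gvec z.1.1 z.1.2 z.2 l') → l0 ≤ l'} := by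
    ext z
    simp only [Set.mem_setOf_eq, Set.mem_inter_iff, Set.mem_iInter]
    exact argmaxIdx_eq_iff _ _
  rw [heq]
  apply MeasurableSet.inter
  · exact MeasurableSet.iInter fun l => measurableSet_le (measurable_G l) (measurable_G l0)
  · apply MeasurableSet.iInter
    intro l'
    rcases le_or_gt l0 l' with h | h
    · have : {z : EE × (Fin m → ℝ) |
          (∀ l, gvec z.1.1 z.1.2 z.2 l ≤ gvec z.1.1 z.1.2 z.2 l') → l0 ≤ l'} = Set.univ := by
        ext z; simp [h]
      rw [this]; exact MeasurableSet.univ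
    · have : {z : EE × (Fin m → ℝ) |
          (∀ l, gvec z.1.1 z.1.2 z.2 l ≤ gvec z.1.1 z.1.2 z.2 l') → l0 ≤ l'}
          = (⋂ l, {z : EE × (Fin m → ℝ) | gvec z.1.1 z.1.2 z.2 l ≤ gvec z.1.1 z.1.2 z.2 l'})ᶜ := by
        ext z
        simp only [Set.mem_setOf_eq, Set.mem_compl_iff, Set.mem_iInter]
        constructor
        · intro hz hall
          exact absurd (hz hall) h.not_ge
        · intro hz hall
          exact absurd hall hz
      rw [this]
      exact (MeasurableSet.iInter fun l =>
        measurableSet_le (measurable_G l) (measurable_G l')).compl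

lemma measurable_mxvec :
    Measurable fun z : EE × (Fin m → ℝ) => mxvec z.1.1 z.1.2 z.2 := by
  apply measurable_pi_lambda
  intro l
  have heq : (fun z : EE × (Fin m → ℝ) => mxvec z.1.1 z.1.2 z.2 l)
      = Set.indicator ({z : EE × (Fin m → ℝ) | argmaxIdx (gvec z.1.1 z.1.2 z.2) = l}
          ∩ {z | 0 < gvec z.1.1 z.1.2 z.2 l}) (fun _ => (1:ℝ)) := by
    ext z
    rw [mxvec_apply, Set.indicator_apply]
    by_cases hc : argmaxIdx (gvec z.1.1 z.1.2 z.2) = l ∧ 0 < gvec z.1.1 z.1.2 z.2 l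
    · rw [if_pos hc, if_pos (by exact hc)]
    · rw [if_neg hc, if_neg (by exact hc)]
  rw [heq]
  exact measurable_const.indicator
    ((measurable_Mset l).inter (measurableSet_lt measurable_const (measurable_G l)))

lemma measurable_phiF :
    Measurable fun z : EE × (Fin m → ℝ) => phiF z.1.1 z.1.2 z.2 := by
  have heq : (fun z : EE × (Fin m → ℝ) =>
      gvec z.1.1 z.1.2 z.2 (argmaxIdx (gvec z.1.1 z.1.2 z.2)))
      = fun z => ∑ l0, Set.indicator
          {z : EE × (Fin m → ℝ) | argmaxIdx (gvec z.1.1 z.1.2 z.2) = l0}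
          (fun z => gvec z.1.1 z.1.2 z.2 l0) z := by
    ext z
    rw [Finset.sum_eq_single_of_mem (argmaxIdx (gvec z.1.1 z.1.2 z.2)) (Finset.mem_univ _)]
    · rw [Set.indicator_of_mem (by exact rfl)]
    · intro l0 _ hl0
      exact Set.indicator_of_notMem (fun (hz : _ = l0) => absurd hz.symm hl0) _
  have hmeas : Measurable fun z : EE × (Fin m → ℝ) =>
      gvec z.1.1 z.1.2 z.2 (argmaxIdx (gvec z.1.1 z.1.2 z.2)) := by
    rw [heq]
    exact Finset.measurable_sum _ fun l0 _ =>
      (measurable_G l0).indicator (measurable_Mset l0)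
  exact hmeas.max measurable_const

lemma mpIter_congr (n : ℕ) (r r' : ℕ → Fin k → ℝ) (A A' : ℕ → Fin m → Fin k → ℝ)
    (d : Fin m → ℝ) (t : ℕ) (h : ∀ s < t, r s = r' s ∧ A s = A' s) :
    mpIter m k n r A d t = mpIter m k n r' A' d t := by
  induction t with
  | zero => rfl
  | succ t ih =>
    have hih := ih fun s hs => h s (hs.trans (Nat.lt_succ_self t))
    have hr := (h t (Nat.lt_succ_self t)).1
    have hA := (h t (Nat.lt_succ_self t)).2
    funext i
    show max (mpIter m k n r A d t i + _) 0 = max (mpIter m k n r' A' d t i + _) 0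
    rw [hih, hr, hA]

lemma measurable_mpIter {α : Type*} [MeasurableSpace α] (n : ℕ) (d : Fin m → ℝ)
    (r : ℕ → α → Fin k → ℝ) (A : ℕ → α → Fin m → Fin k → ℝ) (t : ℕ)
    (hr : ∀ s < t, Measurable (r s)) (hA : ∀ s < t, Measurable (A s)) :
    Measurable fun a => mpIter m k n (fun j => r j a) (fun j => A j a) d t := by
  induction t with
  | zero => exact measurable_const
  | succ t ih =>
    have hPrev : Measurable fun a => mpIter m k n (fun j => r j a) (fun j => A j a) d t :=
      ih (fun s hs => hr s (hs.trans (Nat.lt_succ_self t)))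
        (fun s hs => hA s (hs.trans (Nat.lt_succ_self t)))
    have hrt := hr t (Nat.lt_succ_self t)
    have hAt := hA t (Nat.lt_succ_self t)
    have hmx : Measurable fun a =>
        mxvec (r t a) (A t a) (mpIter m k n (fun j => r j a) (fun j => A j a) d t) :=
      measurable_mxvec.comp ((hrt.prodMk hAt).prodMk hPrev)
    apply measurable_pi_lambda
    intro i
    apply Measurable.max _ measurable_const
    apply Measurable.add
    · exact (measurable_pi_apply i).comp hPrev
    · apply Measurable.const_mul
      apply Measurable.sub _ measurable_const
      apply Finset.measurable_sum
      intro l _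
      exact ((measurable_pi_apply l).comp ((measurable_pi_apply i).comp hAt)).mul
        ((measurable_pi_apply l).comp hmx)

end Meas
section Bounds

variable {m k : ℕ} [NeZero k]

lemma mxvec_dot_abs_le (rt : Fin k → ℝ) (At : Fin m → Fin k → ℝ) (pt : Fin m → ℝ)
    (c : Fin k → ℝ) (C : ℝ) (hC : ∀ l, |c l| ≤ C) :
    |∑ l, c l * mxvec rt At pt l| ≤ C := by
  classical
  have hC0 : 0 ≤ C := le_trans (abs_nonneg _) (hC 0)
  by_cases hpos : 0 < gvec rt At pt (argmaxIdx (gvec rt At pt))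
  · rw [mxvec_pos_eq rt At pt hpos]
    have : ∑ l, c l * (if l = argmaxIdx (gvec rt At pt) then (1:ℝ) else 0)
        = c (argmaxIdx (gvec rt At pt)) := by simp [Finset.sum_ite_eq']
    rw [this]; exact hC _
  · rw [mxvec_neg_eq rt At pt hpos]; simpa using hC0

lemma gvec_abs_le (rt : Fin k → ℝ) (At : Fin m → Fin k → ℝ) (pt : Fin m → ℝ)
    (R C D : ℝ) (hr : ∀ l, |rt l| ≤ R) (hA : ∀ i l, |At i l| ≤ C)
    (hp : ∀ i, |pt i| ≤ D) (l : Fin k) :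
    |gvec rt At pt l| ≤ R + m * (C * D) := by
  rw [gvec]
  apply abs_sub_le' _ _ _ _ (hr l)
  calc |∑ i, At i l * pt i| ≤ ∑ i, |At i l * pt i| := Finset.abs_sum_le_sum_abs _ _
    _ ≤ ∑ _i : Fin m, C * D := by
        apply Finset.sum_le_sum
        intro i _
        rw [abs_mul]
        exact mul_le_mul (hA i l) (hp i) (abs_nonneg _) (le_trans (abs_nonneg _) (hA i l))
    _ = m * (C * D) := by simp [mul_comm]

lemma phiF_le_bound (rt : Fin k → ℝ) (At : Fin m → Fin k → ℝ) (pt : Fin m → ℝ)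
    (R C D : ℝ) (hr : ∀ l, |rt l| ≤ R) (hA : ∀ i l, |At i l| ≤ C)
    (hp : ∀ i, |pt i| ≤ D) :
    phiF rt At pt ≤ R + m * (C * D) := by
  rw [phiF]
  apply max_le
  · exact le_trans (le_abs_self _) (gvec_abs_le rt At pt R C D hr hA hp _)
  · have hR : 0 ≤ R := le_trans (abs_nonneg _) (hr 0)
    rcases Nat.eq_zero_or_pos m with hm | hm
    · subst hm; simpa using hR
    · have i : Fin m := ⟨0, hm⟩
      have hC : 0 ≤ C := le_trans (abs_nonneg _) (hA i 0)
      have hD : 0 ≤ D := le_trans (abs_nonneg _) (hp i)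
      have : 0 ≤ (m:ℝ) * (C * D) := by positivity
      linarith

lemma integrable_of_abs_le {Ω : Type*} [MeasurableSpace Ω] (μ : Measure Ω)
    [IsFiniteMeasure μ] {f : Ω → ℝ} (hm : AEStronglyMeasurable f μ) (C : ℝ)
    (h : ∀ᵐ ω ∂μ, |f ω| ≤ C) : Integrable f μ :=
  (integrable_const C).mono' hm (by simpa [Real.norm_eq_abs] using h)

end Bounds
/-- (Theorem 3, stochastic-input regret bound, multi-dimensional
setting.) For i.i.d. data `(r_j, A_j)` bounded by `r̄, ā` a.s., `0 < d̲ ≤ d_i ≤ d̄`, the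
multi-dimensional Simple Online Algorithm with step size `1/√n` and smallest-index
tie-breaking satisfies `E[R_n* − R_n] ≤ m (ā + d̄)² √n`. -/
theorem stmt17 {Ω : Type*} [MeasurableSpace Ω] (μ : Measure Ω) [IsProbabilityMeasure μ]
    (m k n : ℕ) [NeZero k] (hn : 0 < n)
    (r : ℕ → Ω → Fin k → ℝ) (A : ℕ → Ω → Fin m → Fin k → ℝ)
    (hmeas : ∀ j < n, Measurable fun ω => (r j ω, A j ω))
    (hindep : iIndepFun
      (fun (j : Fin n) ω => (r j.val ω, A j.val ω)) μ)
    (hident : ∀ j < n, Measure.map (fun ω => (r j ω, A j ω)) μ =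
      Measure.map (fun ω => (r 0 ω, A 0 ω)) μ)
    (rbar abar dlb dbar : ℝ) (hdlb : 0 < dlb) (d : Fin m → ℝ)
    (hbdd : ∀ j < n, ∀ᵐ ω ∂μ, (∀ l, |r j ω l| ≤ rbar) ∧ ∀ i l, |A j ω i l| ≤ abar)
    (hd : ∀ i, dlb ≤ d i ∧ d i ≤ dbar) :
    ∫ ω, (LPvalMD n m k (fun j => r j.val ω) (fun j => A j.val ω) (fun i => (n : ℝ) * d i)
        - ∑ t ∈ Finset.range n, ∑ l,
            r t ω l *
              mxvec (r t ω) (A t ω)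
                (mpIter m k n (fun j => r j ω) (fun j => A j ω) d t) l) ∂μ
      ≤ (m : ℝ) * (abar + dbar) ^ 2 * Real.sqrt n := by
  classical
  have hn' : (0:ℝ) < n := by exact_mod_cast hn
  set Rstar : Ω → ℝ := fun ω =>
    LPvalMD n m k (fun j => r j.val ω) (fun j => A j.val ω) (fun i => (n : ℝ) * d i)
    with hRstar
  set P : ℕ → Ω → Fin m → ℝ :=
    fun t ω => mpIter m k n (fun j => r j ω) (fun j => A j ω) d t with hPdef
  set xv : ℕ → Ω → Fin k → ℝ := fun t ω => mxvec (r t ω) (A t ω) (P t ω) with hxvdef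
  set w : ℕ → Ω → Fin m → ℝ := fun t ω i => ∑ l, A t ω i l * xv t ω l with hwdef
  set φt : ℕ → Ω → ℝ := fun t ω => phiF (r t ω) (A t ω) (P t ω) with hφdef
  set Rn : Ω → ℝ := fun ω => ∑ t ∈ Finset.range n, ∑ l, r t ω l * xv t ω l with hRndef
  show ∫ ω, (Rstar ω - Rn ω) ∂μ ≤ (m : ℝ) * (abar + dbar) ^ 2 * Real.sqrt n
  -- measurability
  have hrme : ∀ t < n, Measurable (r t) := fun t ht => (measurable_fst.comp (hmeas t ht))
  have hAme : ∀ t < n, Measurable (A t) := fun t ht => (measurable_snd.comp (hmeas t ht))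
  have hPme : ∀ t ≤ n, Measurable (P t) := fun t ht =>
    measurable_mpIter n d r A t (fun s hs => hrme s (lt_of_lt_of_le hs ht))
      (fun s hs => hAme s (lt_of_lt_of_le hs ht))
  have hxvme : ∀ t < n, Measurable (xv t) := fun t ht =>
    measurable_mxvec.comp (((hrme t ht).prodMk (hAme t ht)).prodMk (hPme t ht.le))
  have hφme : ∀ t < n, Measurable (φt t) := fun t ht =>
    measurable_phiF.comp (((hrme t ht).prodMk (hAme t ht)).prodMk (hPme t ht.le))
  -- a.s. boundedness
  have habs : ∀ᵐ ω ∂μ, ∀ t, t < n →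
      (∀ l, |r t ω l| ≤ rbar) ∧ (∀ i l, |A t ω i l| ≤ abar) := by
    rw [MeasureTheory.ae_all_iff]
    intro t
    rcases lt_or_ge t n with h | h
    · filter_upwards [hbdd t h] with ω hω _
      exact hω
    · exact Filter.Eventually.of_forall fun ω hlt => absurd hlt (not_lt.mpr h)
  set Cp : ℝ := Real.sqrt n * (|abar| + |dbar|) with hCpdef
  have hCp0 : 0 ≤ Cp := by positivity
  have hd0 : ∀ i, 0 ≤ d i := fun i => le_trans hdlb.le (hd i).1
  have hPbd : ∀ᵐ ω ∂μ, ∀ t ≤ n, ∀ i, |P t ω i| ≤ Cp := by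
    filter_upwards [habs] with ω hω
    intro t ht i
    have h0 := mpIter_nonneg (m := m) (k := k) n (fun j => r j ω) (fun j => A j ω) d t i
    rw [abs_of_nonneg h0]
    have hb := mpIter_le n (fun j => r j ω) (fun j => A j ω) d |abar| |dbar| t
      (fun s hs i' l => le_trans ((hω s (lt_of_lt_of_le hs ht)).2 i' l) (le_abs_self abar))
      (fun i' => ⟨hd0 i', le_trans (hd i').2 (le_abs_self dbar)⟩) i
    refine le_trans hb ?_
    have hs : (0:ℝ) < Real.sqrt n := Real.sqrt_pos.mpr hn'
    have h1 : (t:ℝ) * (1 / Real.sqrt n) ≤ Real.sqrt n := by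
      rw [mul_one_div, div_le_iff₀ hs, Real.mul_self_sqrt hn'.le]
      exact_mod_cast ht
    calc (t:ℝ) * (1 / Real.sqrt n) * (|abar| + |dbar|)
        ≤ Real.sqrt n * (|abar| + |dbar|) :=
          mul_le_mul_of_nonneg_right h1 (by positivity)
      _ = Cp := rfl
  set Cφ : ℝ := |rbar| + m * (|abar| * Cp) with hCφdef
  have hφbd : ∀ t < n, ∀ᵐ ω ∂μ, |φt t ω| ≤ Cφ := by
    intro t ht
    filter_upwards [habs, hPbd] with ω h1 h2
    rw [hφdef, abs_of_nonneg (phiF_nonneg _ _ _)]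
    exact phiF_le_bound _ _ _ _ _ _
      (fun l => le_trans ((h1 t ht).1 l) (le_abs_self _))
      (fun i l => le_trans ((h1 t ht).2 i l) (le_abs_self _))
      (h2 t ht.le)
  -- integrability of the various terms
  have int_φ : ∀ t < n, Integrable (φt t) μ := fun t ht =>
    integrable_of_abs_le μ (hφme t ht).aestronglyMeasurable Cφ (hφbd t ht)
  have int_rx : ∀ t < n, Integrable (fun ω => ∑ l, r t ω l * xv t ω l) μ := by
    intro t ht
    apply integrable_of_abs_le μ _ |rbar|
    · filter_upwards [habs] with ω h1
      exact mxvec_dot_abs_le _ _ _ _ _ (fun l => le_trans ((h1 t ht).1 l) (le_abs_self _))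
    · apply Measurable.aestronglyMeasurable
      apply Finset.measurable_sum
      intro l _
      exact ((measurable_pi_apply l).comp (hrme t ht)).mul
        ((measurable_pi_apply l).comp (hxvme t ht))
  have hwme : ∀ t < n, ∀ i, Measurable fun ω => w t ω i := by
    intro t ht i
    apply Finset.measurable_sum
    intro l _
    exact ((measurable_pi_apply l).comp ((measurable_pi_apply i).comp (hAme t ht))).mul
      ((measurable_pi_apply l).comp (hxvme t ht))
  have int_dP : ∀ t < n, Integrable (fun ω => ∑ i, d i * P t ω i) μ := by
    intro t ht
    apply integrable_of_abs_le μ _ ((m:ℝ) * (|dbar| * Cp))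
    · filter_upwards [hPbd] with ω h2
      calc |∑ i, d i * P t ω i| ≤ ∑ i, |d i * P t ω i| := Finset.abs_sum_le_sum_abs _ _
        _ ≤ ∑ _i : Fin m, |dbar| * Cp := by
            apply Finset.sum_le_sum
            intro i _
            rw [abs_mul]
            exact mul_le_mul (le_trans (le_trans (abs_of_nonneg (hd0 i)).le (hd i).2)
              (le_abs_self dbar)) (h2 t ht.le i) (abs_nonneg _)
              (abs_nonneg _)
        _ = (m:ℝ) * (|dbar| * Cp) := by simp [mul_comm]
    · apply Measurable.aestronglyMeasurable
      apply Finset.measurable_sum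
      intro i _
      exact measurable_const.mul ((measurable_pi_apply i).comp (hPme t ht.le))
  have hwbd : ∀ t < n, ∀ᵐ ω ∂μ, ∀ i, |w t ω i| ≤ |abar| := by
    intro t ht
    filter_upwards [habs] with ω h1
    intro i
    exact mxvec_dot_abs_le _ _ _ _ _ (fun l => le_trans ((h1 t ht).2 i l) (le_abs_self _))
  have int_Pdw : ∀ t < n, Integrable (fun ω => ∑ i, P t ω i * (d i - w t ω i)) μ := by
    intro t ht
    apply integrable_of_abs_le μ _ ((m:ℝ) * (Cp * (|dbar| + |abar|)))
    · filter_upwards [hPbd, hwbd t ht] with ω h2 h3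
      calc |∑ i, P t ω i * (d i - w t ω i)| ≤ ∑ i, |P t ω i * (d i - w t ω i)| :=
            Finset.abs_sum_le_sum_abs _ _
        _ ≤ ∑ _i : Fin m, Cp * (|dbar| + |abar|) := by
            apply Finset.sum_le_sum
            intro i _
            rw [abs_mul]
            have hdw : |d i - w t ω i| ≤ |dbar| + |abar| :=
              abs_sub_le' _ _ _ _ (le_trans (le_trans (abs_of_nonneg (hd0 i)).le (hd i).2)
                (le_abs_self dbar)) (h3 i)
            exact mul_le_mul (h2 t ht.le i) hdw (abs_nonneg _) hCp0
        _ = (m:ℝ) * (Cp * (|dbar| + |abar|)) := by simp [mul_comm]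
    · apply Measurable.aestronglyMeasurable
      apply Finset.measurable_sum
      intro i _
      exact ((measurable_pi_apply i).comp (hPme t ht.le)).mul
        (measurable_const.sub (hwme t ht i))
  have int_Pw : ∀ t < n, Integrable (fun ω => ∑ i, P t ω i * w t ω i) μ := by
    intro t ht
    apply integrable_of_abs_le μ _ ((m:ℝ) * (Cp * |abar|))
    · filter_upwards [hPbd, hwbd t ht] with ω h2 h3
      calc |∑ i, P t ω i * w t ω i| ≤ ∑ i, |P t ω i * w t ω i| :=
            Finset.abs_sum_le_sum_abs _ _
        _ ≤ ∑ _i : Fin m, Cp * |abar| := by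
            apply Finset.sum_le_sum
            intro i _
            rw [abs_mul]
            exact mul_le_mul (h2 t ht.le i) (h3 i) (abs_nonneg _) hCp0
        _ = (m:ℝ) * (Cp * |abar|) := by simp [mul_comm]
    · apply Measurable.aestronglyMeasurable
      apply Finset.measurable_sum
      intro i _
      exact ((measurable_pi_apply i).comp (hPme t ht.le)).mul (hwme t ht i)
  -- the common law of the data
  have hX0me : Measurable fun ω => (r 0 ω, A 0 ω) := hmeas 0 hn
  set ν : Measure ((Fin k → ℝ) × (Fin m → Fin k → ℝ)) :=
    μ.map (fun ω => (r 0 ω, A 0 ω)) with hνdef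
  haveI : IsProbabilityMeasure ν := Measure.isProbabilityMeasure_map hX0me.aemeasurable
  have hlawX : ∀ t < n, μ.map (fun ω => (r t ω, A t ω)) = ν := fun t ht => hident t ht
  set Φ : (Fin m → ℝ) × ((Fin k → ℝ) × (Fin m → Fin k → ℝ)) → ℝ :=
    fun z => phiF z.2.1 z.2.2 z.1 with hΦdef
  have hΦme : Measurable Φ := measurable_phiF.comp measurable_swap
  -- independence of the price process and the current data
  have hindepPX : ∀ t, t < n → IndepFun (P t) (fun ω => (r t ω, A t ω)) μ := by
    intro t ht
    set S : Finset (Fin n) := Finset.univ.filter (fun j => (j:ℕ) < t) with hS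
    set T : Finset (Fin n) := {(⟨t, ht⟩ : Fin n)} with hT
    have hdisj : Disjoint S T := by
      rw [hT, Finset.disjoint_singleton_right]
      simp [hS]
    have hIF := hindep.indepFun_finset S T hdisj (fun j => hmeas j.val j.isLt)
    have hmem : ∀ (j : ℕ) (hj : j < t), (⟨j, hj.trans ht⟩ : Fin n) ∈ S :=
      fun j hj => Finset.mem_filter.mpr ⟨Finset.mem_univ _, hj⟩
    set F : ({x // x ∈ S} → (Fin k → ℝ) × (Fin m → Fin k → ℝ)) → (Fin m → ℝ) := fun v =>
      mpIter m k n
        (fun j => if h : j < t then (v ⟨⟨j, h.trans ht⟩, hmem j h⟩).1 else 0)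
        (fun j => if h : j < t then (v ⟨⟨j, h.trans ht⟩, hmem j h⟩).2 else 0) d t with hFdef
    have hFme : Measurable F := by
      rw [hFdef]
      exact measurable_mpIter n d
        (fun j (v : {x // x ∈ S} → (Fin k → ℝ) × (Fin m → Fin k → ℝ)) =>
          if h : j < t then (v ⟨⟨j, h.trans ht⟩, hmem j h⟩).1 else 0)
        (fun j (v : {x // x ∈ S} → (Fin k → ℝ) × (Fin m → Fin k → ℝ)) =>
          if h : j < t then (v ⟨⟨j, h.trans ht⟩, hmem j h⟩).2 else 0) t
        (fun s hs => by simp only [dif_pos hs]; exact (measurable_pi_apply _).fst)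
        (fun s hs => by simp only [dif_pos hs]; exact (measurable_pi_apply _).snd)
    have hTmem : (⟨t, ht⟩ : Fin n) ∈ T := by rw [hT]; exact Finset.mem_singleton_self _
    have hGme : Measurable fun v : {x // x ∈ T} → (Fin k → ℝ) × (Fin m → Fin k → ℝ) =>
        v ⟨⟨t, ht⟩, hTmem⟩ := measurable_pi_apply _
    have hcomp := hIF.comp hFme hGme
    have h1 : P t = F ∘ (fun ω (i : {x // x ∈ S}) =>
        (r (i.val.val) ω, A (i.val.val) ω)) := by
      funext ω
      simp only [Function.comp_apply, hFdef, hPdef]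
      apply mpIter_congr
      intro s hs
      constructor
      · simp [dif_pos hs]
      · simp [dif_pos hs]
    have h2 : (fun ω => (r t ω, A t ω)) =
        (fun v : {x // x ∈ T} → (Fin k → ℝ) × (Fin m → Fin k → ℝ) => v ⟨⟨t, ht⟩, hTmem⟩) ∘
          (fun ω (i : {x // x ∈ T}) => (r (i.val.val) ω, A (i.val.val) ω)) := rfl
    rw [h1, h2]
    exact hcomp
  -- joint law is the product law
  have hprodlaw : ∀ t, t < n → μ.map (fun ω => (P t ω, (r t ω, A t ω)))
      = (μ.map (P t)).prod ν := by
    intro t ht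
    rw [← hlawX t ht]
    exact (indepFun_iff_map_prod_eq_prod_map_map (hPme t ht.le).aemeasurable
      (hmeas t ht).aemeasurable).mp (hindepPX t ht)
  -- measurable bounding sets
  have hGp : MeasurableSet {p : Fin m → ℝ | ∀ i, |p i| ≤ Cp} := by
    have e : {p : Fin m → ℝ | ∀ i, |p i| ≤ Cp} = ⋂ i, {p : Fin m → ℝ | |p i| ≤ Cp} := by
      ext p; simp [Set.mem_iInter]
    rw [e]
    exact MeasurableSet.iInter fun i =>
      measurableSet_le (measurable_pi_apply i).abs measurable_const
  have hGx : MeasurableSet {x : (Fin k → ℝ) × (Fin m → Fin k → ℝ) |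
      (∀ l, |x.1 l| ≤ rbar) ∧ ∀ i l, |x.2 i l| ≤ abar} := by
    have e : {x : (Fin k → ℝ) × (Fin m → Fin k → ℝ) |
        (∀ l, |x.1 l| ≤ rbar) ∧ ∀ i l, |x.2 i l| ≤ abar}
        = (⋂ l, {x : (Fin k → ℝ) × (Fin m → Fin k → ℝ) | |x.1 l| ≤ rbar})
          ∩ ⋂ i, ⋂ l, {x : (Fin k → ℝ) × (Fin m → Fin k → ℝ) | |x.2 i l| ≤ abar} := by
      ext x; simp [Set.mem_iInter, Set.mem_inter_iff]
    rw [e]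
    exact (MeasurableSet.iInter fun l => measurableSet_le
        ((measurable_pi_apply l).comp measurable_fst).abs measurable_const).inter
      (MeasurableSet.iInter fun i => MeasurableSet.iInter fun l => measurableSet_le
        ((measurable_pi_apply l).comp ((measurable_pi_apply i).comp measurable_snd)).abs
        measurable_const)
  have hνbd : ∀ᵐ x ∂ν, (∀ l, |x.1 l| ≤ rbar) ∧ ∀ i l, |x.2 i l| ≤ abar := by
    rw [hνdef]
    exact (MeasureTheory.ae_map_iff hX0me.aemeasurable hGx).mpr (hbdd 0 hn)
  -- Fubini step for each t
  have hfub : ∀ t, t < n → (∫ ω, φt t ω ∂μ = ∫ ω, (∫ x, Φ (P t ω, x) ∂ν) ∂μ)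
      ∧ Integrable (fun ω => ∫ x, Φ (P t ω, x) ∂ν) μ := by
    intro t ht
    set ρ : Measure (Fin m → ℝ) := μ.map (P t) with hρdef
    haveI : IsProbabilityMeasure ρ := Measure.isProbabilityMeasure_map (hPme t ht.le).aemeasurable
    have hρbd : ∀ᵐ p ∂ρ, ∀ i, |p i| ≤ Cp := by
      rw [hρdef]
      exact (MeasureTheory.ae_map_iff (hPme t ht.le).aemeasurable hGp).mpr
        (hPbd.mono fun ω h => h t ht.le)
    have h1 : ∀ᵐ z ∂(ρ.prod ν), ∀ i, |z.1 i| ≤ Cp := by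
      rw [ae_iff]
      have e : {z : (Fin m → ℝ) × ((Fin k → ℝ) × (Fin m → Fin k → ℝ)) |
          ¬ ∀ i, |z.1 i| ≤ Cp} = {p | ¬ ∀ i, |p i| ≤ Cp} ×ˢ Set.univ := by
        ext z; simp [Set.mem_prod]
      rw [e, Measure.prod_prod]
      rw [ae_iff] at hρbd
      rw [hρbd, zero_mul]
    have h2 : ∀ᵐ z ∂(ρ.prod ν), (∀ l, |z.2.1 l| ≤ rbar) ∧ ∀ i l, |z.2.2 i l| ≤ abar := by
      rw [ae_iff]
      have e : {z : (Fin m → ℝ) × ((Fin k → ℝ) × (Fin m → Fin k → ℝ)) |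
          ¬ ((∀ l, |z.2.1 l| ≤ rbar) ∧ ∀ i l, |z.2.2 i l| ≤ abar)}
          = Set.univ ×ˢ {x : (Fin k → ℝ) × (Fin m → Fin k → ℝ) |
              ¬ ((∀ l, |x.1 l| ≤ rbar) ∧ ∀ i l, |x.2 i l| ≤ abar)} := by
        ext z; simp [Set.mem_prod]
      rw [e, Measure.prod_prod]
      rw [ae_iff] at hνbd
      rw [hνbd, mul_zero]
    have haebd : ∀ᵐ z ∂(ρ.prod ν), |Φ z| ≤ Cφ := by
      filter_upwards [h1, h2] with z hz1 hz2
      rw [hΦdef]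
      rw [abs_of_nonneg (phiF_nonneg _ _ _)]
      exact phiF_le_bound _ _ _ _ _ _ (fun l => (hz2.1 l).trans (le_abs_self _))
        (fun i l => (hz2.2 i l).trans (le_abs_self _)) hz1
    have hΦint : Integrable Φ (ρ.prod ν) :=
      integrable_of_abs_le _ hΦme.aestronglyMeasurable Cφ haebd
    have hf1me : StronglyMeasurable fun p => ∫ x, Φ (p, x) ∂ν :=
      hΦme.stronglyMeasurable.integral_prod_right'
    constructor
    · have e1 : ∫ ω, φt t ω ∂μ
          = ∫ z, Φ z ∂(μ.map (fun ω => (P t ω, (r t ω, A t ω)))) := by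
        rw [integral_map ((hPme t ht.le).prodMk (hmeas t ht)).aemeasurable
          hΦme.aestronglyMeasurable]
      rw [e1, hprodlaw t ht, ← hρdef, integral_prod _ hΦint, hρdef,
        integral_map (hPme t ht.le).aemeasurable hf1me.aestronglyMeasurable]
    · have hintp := hΦint.integral_prod_left
      rw [hρdef] at hintp
      exact (integrable_map_measure hf1me.aestronglyMeasurable
        (hPme t ht.le).aemeasurable).mp hintp
  -- main case split on integrability
  by_cases hInt : Integrable (fun ω => Rstar ω - Rn ω) μ
  swap
  · rw [integral_undef hInt]
    positivity
  · have hRnInt : Integrable Rn μ := by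
      rw [hRndef]
      exact integrable_finset_sum _ (fun t ht' => int_rx t (Finset.mem_range.mp ht'))
    have hRstarInt : Integrable Rstar μ := by
      have h2 : Integrable (fun ω => (Rstar ω - Rn ω) + Rn ω) μ := hInt.add hRnInt
      simpa using h2
    have hbne : ∀ i, 0 ≤ (n:ℝ) * d i := fun i => mul_nonneg hn'.le (hd0 i)
    have hint_phi_q : ∀ (q : Fin m → ℝ), ∀ j : Fin n,
        Integrable (fun ω => phiF (r j.val ω) (A j.val ω) q) μ := by
      intro q j
      apply integrable_of_abs_le μ _ (|rbar| + m * (|abar| * (∑ i, |q i|)))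
      · filter_upwards [habs] with ω h1
        rw [abs_of_nonneg (phiF_nonneg _ _ _)]
        exact phiF_le_bound _ _ _ _ _ _
          (fun l => ((h1 j.val j.isLt).1 l).trans (le_abs_self _))
          (fun i l => ((h1 j.val j.isLt).2 i l).trans (le_abs_self _))
          (fun i => Finset.single_le_sum (f := fun i => |q i|)
            (fun i _ => abs_nonneg _) (Finset.mem_univ i))
      · exact (measurable_phiF.comp (((hrme j.val j.isLt).prodMk
          (hAme j.val j.isLt)).prodMk measurable_const)).aestronglyMeasurable
    have hphiq_int_eq : ∀ (q : Fin m → ℝ), ∀ j : Fin n,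
        ∫ ω, phiF (r j.val ω) (A j.val ω) q ∂μ = ∫ x, Φ (q, x) ∂ν := by
      intro q j
      have hg : AEStronglyMeasurable (fun x : (Fin k → ℝ) × (Fin m → Fin k → ℝ) => Φ (q, x))
          (μ.map (fun ω => (r j.val ω, A j.val ω))) :=
        (hΦme.comp (measurable_const.prodMk measurable_id)).aestronglyMeasurable
      rw [← hlawX j.val j.isLt, integral_map (hmeas j.val j.isLt).aemeasurable hg]
    have hclaim : ∀ q : Fin m → ℝ, (∀ i, 0 ≤ q i) →
        ∫ ω, Rstar ω ∂μ ≤ n * ((∑ i, d i * q i) + ∫ x, Φ (q, x) ∂ν) := by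
      intro q hq
      have hpt : ∀ ω, Rstar ω ≤ (∑ i, ((n:ℝ) * d i) * q i)
          + ∑ j : Fin n, phiF (r j.val ω) (A j.val ω) q := fun ω =>
        weak_duality (fun j => r j.val ω) (fun j => A j.val ω) _ hbne q hq
      have hIsum : Integrable (fun ω => ∑ j : Fin n, phiF (r j.val ω) (A j.val ω) q) μ :=
        integrable_finset_sum _ (fun j _ => hint_phi_q q j)
      have hIrhs : Integrable (fun ω => (∑ i, ((n:ℝ) * d i) * q i)
          + ∑ j : Fin n, phiF (r j.val ω) (A j.val ω) q) μ :=
        (integrable_const _).add hIsum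
      have hmono := integral_mono hRstarInt hIrhs hpt
      rw [integral_add (integrable_const _) hIsum, integral_const,
        integral_finset_sum _ (fun j _ => hint_phi_q q j)] at hmono
      simp only [measure_univ, ENNReal.toReal_one, smul_eq_mul, one_mul, probReal_univ] at hmono
      refine le_trans hmono (le_of_eq ?_)
      rw [Finset.sum_congr rfl (fun j _ => hphiq_int_eq q j), Finset.sum_const,
        Finset.card_univ, Fintype.card_fin, nsmul_eq_mul]
      have e2 : ∑ i, ((n:ℝ) * d i) * q i = n * ∑ i, d i * q i := by
        rw [Finset.mul_sum]
        exact Finset.sum_congr rfl fun i _ => by ring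
      rw [e2]
      ring
    have hkey : ∀ t, t < n → (∫ ω, Rstar ω ∂μ) / n
        ≤ (∫ ω, ∑ i, d i * P t ω i ∂μ) + ∫ ω, φt t ω ∂μ := by
      intro t ht
      obtain ⟨hfub1, hfub2⟩ := hfub t ht
      have hpt : ∀ ω, (∫ ω', Rstar ω' ∂μ) / n
          ≤ (∑ i, d i * P t ω i) + ∫ x, Φ (P t ω, x) ∂ν := by
        intro ω
        rw [div_le_iff₀ hn']
        have hc := hclaim (P t ω) (fun i => mpIter_nonneg n _ _ d t i)
        linarith [hc]
      have hIrhs : Integrable (fun ω => (∑ i, d i * P t ω i)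
          + ∫ x, Φ (P t ω, x) ∂ν) μ := (int_dP t ht).add hfub2
      have h5 := integral_mono (integrable_const _) hIrhs hpt
      rw [integral_const] at h5
      simp only [measure_univ, ENNReal.toReal_one, one_smul, probReal_univ] at h5
      rw [integral_add (int_dP t ht) hfub2] at h5
      rw [hfub1]
      exact h5
    rw [integral_sub hRstarInt hRnInt]
    have hRn_eq : ∫ ω, Rn ω ∂μ = ∑ t ∈ Finset.range n,
        ((∫ ω, φt t ω ∂μ) + ∫ ω, ∑ i, P t ω i * w t ω i ∂μ) := by
      rw [hRndef]
      rw [integral_finset_sum _ (fun t ht' => int_rx t (Finset.mem_range.mp ht'))]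
      apply Finset.sum_congr rfl
      intro t ht'
      have ht := Finset.mem_range.mp ht'
      have e : (fun ω => ∑ l, r t ω l * xv t ω l)
          = fun ω => φt t ω + ∑ i, P t ω i * w t ω i := by
        funext ω
        exact step_identity (r t ω) (A t ω) (P t ω)
      rw [e, integral_add (int_φ t ht) (int_Pw t ht)]
    have hRstar_le : ∫ ω, Rstar ω ∂μ ≤ ∑ t ∈ Finset.range n,
        ((∫ ω, ∑ i, d i * P t ω i ∂μ) + ∫ ω, φt t ω ∂μ) := by
      have e : ∫ ω, Rstar ω ∂μ = ∑ _t ∈ Finset.range n, (∫ ω, Rstar ω ∂μ) / n := by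
        rw [Finset.sum_const, Finset.card_range, nsmul_eq_mul]
        field_simp
      rw [e]
      exact Finset.sum_le_sum fun t ht' => hkey t (Finset.mem_range.mp ht')
    have hdiff : ∫ ω, Rstar ω ∂μ - ∫ ω, Rn ω ∂μ
        ≤ ∑ t ∈ Finset.range n, ∫ ω, ∑ i, P t ω i * (d i - w t ω i) ∂μ := by
      rw [hRn_eq]
      have e : ∀ t ∈ Finset.range n,
          ((∫ ω, ∑ i, d i * P t ω i ∂μ) + ∫ ω, φt t ω ∂μ)
            - ((∫ ω, φt t ω ∂μ) + ∫ ω, ∑ i, P t ω i * w t ω i ∂μ)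
          = ∫ ω, ∑ i, P t ω i * (d i - w t ω i) ∂μ := by
        intro t ht'
        have ht := Finset.mem_range.mp ht'
        have e2 : (fun ω => ∑ i, P t ω i * (d i - w t ω i))
            = fun ω => (∑ i, d i * P t ω i) - ∑ i, P t ω i * w t ω i := by
          funext ω
          rw [← Finset.sum_sub_distrib]
          exact Finset.sum_congr rfl fun i _ => by ring
        rw [e2, integral_sub (int_dP t ht) (int_Pw t ht)]
        ring
      calc ∫ ω, Rstar ω ∂μ - ∑ t ∈ Finset.range n,
            ((∫ ω, φt t ω ∂μ) + ∫ ω, ∑ i, P t ω i * w t ω i ∂μ)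
          ≤ (∑ t ∈ Finset.range n,
              ((∫ ω, ∑ i, d i * P t ω i ∂μ) + ∫ ω, φt t ω ∂μ))
            - ∑ t ∈ Finset.range n,
              ((∫ ω, φt t ω ∂μ) + ∫ ω, ∑ i, P t ω i * w t ω i ∂μ) := by
            linarith [hRstar_le]
        _ = ∑ t ∈ Finset.range n,
              (((∫ ω, ∑ i, d i * P t ω i ∂μ) + ∫ ω, φt t ω ∂μ)
                - ((∫ ω, φt t ω ∂μ) + ∫ ω, ∑ i, P t ω i * w t ω i ∂μ)) :=
            (Finset.sum_sub_distrib _ _).symm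
        _ = ∑ t ∈ Finset.range n, ∫ ω, ∑ i, P t ω i * (d i - w t ω i) ∂μ :=
            Finset.sum_congr rfl e
    refine le_trans hdiff ?_
    rw [← integral_finset_sum _ (fun t ht' => int_Pdw t (Finset.mem_range.mp ht'))]
    have htele : ∀ᵐ ω ∂μ, ∑ t ∈ Finset.range n, ∑ i, P t ω i * (d i - w t ω i)
        ≤ Real.sqrt n * ((m:ℝ) * (abar + dbar)^2) / 2 := by
      filter_upwards [habs] with ω h1
      exact telescope_bound n hn (fun j => r j ω) (fun j => A j ω) d abar dbar
        (fun t ht i l => (h1 t ht).2 i l) (fun i => ⟨hd0 i, (hd i).2⟩)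
    have hfint : Integrable
        (fun ω => ∑ t ∈ Finset.range n, ∑ i, P t ω i * (d i - w t ω i)) μ :=
      integrable_finset_sum _ (fun t ht' => int_Pdw t (Finset.mem_range.mp ht'))
    have hlast := integral_mono_ae hfint (integrable_const _) htele
    rw [integral_const] at hlast
    simp only [measure_univ, ENNReal.toReal_one, one_smul, probReal_univ] at hlast
    refine le_trans hlast ?_
    have hM : 0 ≤ (m:ℝ) * (abar + dbar)^2 * Real.sqrt n := by positivity
    nlinarith [hM]
end
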